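/- arXiv:1002.2734 — 7 statements merged into one kernel-verified Lean document; each statement's English description precedes it below -/
import Mathlib

section
/- Let α ∈ ℝ be an irrational number with bounded partial quotients, and define N : ℝ × ℝ → ℤ by N(x, x') = ⌊x'⌋ − ⌊x⌋. Then there exist positive constants C₁, C₂ such that for every pair x, x' ∈ ℝ with 0 < |x − x'| < 1/2, the sequence (N(x + nα, x' + nα))_{n≥0} is (C₁/|x − x'|, C₂/|x − x'|)-sparse. (Lemma 7.1.) -/
noncomputable section

/-- `‖t‖`: the distance from a real number `t` to the nearest integer. -/
def nint (t : ℝ) : ℝ := |t - round t|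

/-- A sequence `(x n)` of integers is `a`-sparse (Definition 5): there is a strictly
increasing sequence `(k m)` with `k 0 = 0` such that for `n ≥ 1`, `x n ≠ 0` iff
`n = k m` for some `m ≥ 1`, and `k (m+1) − k m ≥ a` for all `m ≥ 1`. -/
def IsSparse (a : ℝ) (x : ℕ → ℤ) : Prop :=
  ∃ k : ℕ → ℕ, StrictMono k ∧ k 0 = 0 ∧
    (∀ n : ℕ, 1 ≤ n → (x n ≠ 0 ↔ ∃ m : ℕ, 1 ≤ m ∧ n = k m)) ∧
    (∀ m : ℕ, 1 ≤ m → a ≤ (k (m + 1) : ℝ) - (k m : ℝ))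

/-- A sequence is `(a,b)`-sparse if it is `a`-sparse and moreover
`k (m+1) − k m ≤ b` for all `m ≥ 0`. -/
def IsSparseBtw (a b : ℝ) (x : ℕ → ℤ) : Prop :=
  ∃ k : ℕ → ℕ, StrictMono k ∧ k 0 = 0 ∧
    (∀ n : ℕ, 1 ≤ n → (x n ≠ 0 ↔ ∃ m : ℕ, 1 ≤ m ∧ n = k m)) ∧
    (∀ m : ℕ, 1 ≤ m → a ≤ (k (m + 1) : ℝ) - (k m : ℝ)) ∧
    (∀ m : ℕ, (k (m + 1) : ℝ) - (k m : ℝ) ≤ b)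


/-
Let `δ = |x - x'|` and let `y` be the smaller of `x, x'`; the `n`-th term is nonzero exactly when
`Int.fract (y + n α) ≥ 1 - δ`. Two such `n < n'` give `‖(n' - n) α‖ < δ`, so the partial quotient
bound forces `n' - n ≥ 1 / (C δ)`.
For the upper bound let `q₁` be the least denominator with `‖q₁ α‖ < δ` and `q₂` the least one with
`‖q₂ α‖ < ‖q₁ α‖`. Dirichlet's theorem gives `q₁ ≤ 1 / δ` and `q₂ ≤ 1 / ‖q₁ α‖ ≤ C q₁`. The errors
`q α - round (q α)` of `q₁` and `q₂` have opposite signs, since otherwise `q₂ - q₁` would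
approximate better than `q₁`. Hence in a window of `q₁ + q₂` consecutive integers one can always
step forward by one of them or backward by the other, staying in the window and raising
`Int.fract (y + n α)` by a positive amount less than `δ`: at the maximum of `Int.fract (y + n α)`
over the window this is impossible unless that maximum is at least `1 - δ`.
-/

def IsBadlyApproximableWith (C α : ℝ) : Prop :=
  ∀ n : ℤ, n ≠ 0 → 1 / (C * |(n : ℝ)|) ≤ nint ((n : ℝ) * α)

def approxDenoms (α ε : ℝ) : Set ℕ := {q | 0 < q ∧ nint (q * α) < ε}

section Approximation

variable {α ε : ℝ} {q q₁ q₂ : ℕ}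

lemma approxDenoms_nonempty (α : ℝ) (hε : 0 < ε) : (approxDenoms α ε).Nonempty := by
  obtain ⟨Q, hQ⟩ := exists_nat_gt (1 / ε)
  have hQ0 : 0 < Q := by exact_mod_cast (one_div_pos.2 hε).trans hQ
  obtain ⟨k, hk0, -, hk⟩ := Real.exists_nat_abs_mul_sub_round_le α hQ0
  refine ⟨k, hk0, hk.trans_lt ?_⟩
  rw [div_lt_iff₀ (by positivity)]
  rw [div_lt_iff₀ hε] at hQ
  linarith

lemma le_nint_of_isLeast (h : IsLeast (approxDenoms α ε) q) {m : ℕ} (hm : 0 < m) (hmq : m < q) :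
    ε ≤ nint (m * α) :=
  not_lt.1 fun hlt => (h.2 ⟨hm, hlt⟩).not_gt hmq

lemma mul_le_one_of_isLeast (h : IsLeast (approxDenoms α ε) q) (hε : ε ≤ 1) : q * ε ≤ 1 := by
  obtain ⟨hq, -⟩ := h.1
  rcases Nat.lt_or_ge q 2 with hq2 | hq2
  · rw [show q = 1 by omega, Nat.cast_one, one_mul]
    exact hε
  obtain ⟨k, hk0, hkq, hk⟩ := Real.exists_nat_abs_mul_sub_round_le α (n := q - 1) (by omega)
  have hle : ε ≤ 1 / q := by
    have hcast : ((q - 1 : ℕ) : ℝ) + 1 = q := by rw [Nat.cast_sub (by omega)]; push_cast; ring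
    exact (le_nint_of_isLeast h hk0 (by omega)).trans (hcast ▸ hk)
  rwa [le_div_iff₀ (by positivity), mul_comm] at hle

lemma lt_of_isLeast_nint (h₁ : IsLeast (approxDenoms α ε) q₁)
    (h₂ : IsLeast (approxDenoms α (nint (q₁ * α))) q₂) : q₁ < q₂ := by
  obtain ⟨hq₂, hlt₂⟩ := h₂.1
  by_contra hle
  rcases (not_lt.1 hle).lt_or_eq with hlt | rfl
  · exact (le_nint_of_isLeast h₁ hq₂ hlt).not_gt (hlt₂.trans h₁.1.2)
  · exact lt_irrefl _ hlt₂

lemma mul_neg_of_isLeast_nint (h₁ : IsLeast (approxDenoms α ε) q₁)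
    (h₂ : IsLeast (approxDenoms α (nint (q₁ * α))) q₂) (h0 : 0 < nint (q₂ * α)) :
    (q₁ * α - round (q₁ * α)) * (q₂ * α - round (q₂ * α)) < 0 := by
  set s₁ := q₁ * α - round (q₁ * α)
  set s₂ := q₂ * α - round (q₂ * α)
  have hlt₂ : |s₂| < |s₁| := h₂.1.2
  have h0' : 0 < |s₂| := h0
  have hq := lt_of_isLeast_nint h₁ h₂
  by_contra hnn
  have hdiff : |s₂ - s₁| < |s₁| := by
    rcases mul_nonneg_iff.1 (not_lt.1 hnn) with ⟨h1, h2⟩ | ⟨h1, h2⟩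
    · rw [abs_of_nonneg h1, abs_of_nonneg h2] at *
      rw [abs_lt]; constructor <;> linarith
    · rw [abs_of_nonpos h1, abs_of_nonpos h2] at *
      rw [abs_lt]; constructor <;> linarith
  have hround := round_le (((q₂ - q₁ : ℕ) : ℝ) * α) (round (q₂ * α) - round (q₁ * α))
  have hcast :
      ((q₂ - q₁ : ℕ) : ℝ) * α - ((round (q₂ * α) - round (q₁ * α) : ℤ) : ℝ) = s₂ - s₁ := by
    rw [Nat.cast_sub hq.le]; push_cast; ring
  rw [hcast] at hround
  have hq₁ := h₁.1.1
  exact (le_nint_of_isLeast h₂ (m := q₂ - q₁) (by omega) (by omega)).not_gt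
    (hround.trans_lt hdiff)

end Approximation

lemma fract_lt_fract_add_add_intCast {y e : ℝ} (he : 0 < e) (h : Int.fract y + e < 1) (k : ℤ) :
    Int.fract y < Int.fract (y + e + k) := by
  have : Int.fract (y + e) = Int.fract y + e :=
    Int.fract_eq_iff.2 ⟨by linarith [Int.fract_nonneg y], h, ⌊y⌋, by rw [Int.fract]; ring⟩
  rw [Int.fract_add_intCast, this]
  linarith

lemma exists_mem_Ico_one_sub_le_fract (y α δ : ℝ) {p q : ℕ}
    (hp : 0 < p * α - round (p * α)) (hpδ : p * α - round (p * α) ≤ δ)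
    (hq : q * α - round (q * α) < 0) (hqδ : -δ ≤ q * α - round (q * α)) (n₀ : ℕ) :
    ∃ n ∈ Finset.Ico n₀ (n₀ + (p + q)), 1 - δ ≤ Int.fract (y + n * α) := by
  have hp0 : p ≠ 0 := by rintro rfl; simp at hp
  obtain ⟨n, hn, hmax⟩ := (Finset.Ico n₀ (n₀ + (p + q))).exists_max_image
    (fun n : ℕ => Int.fract (y + n * α)) (Finset.nonempty_Ico.2 (by omega))
  refine ⟨n, hn, not_lt.1 fun hlt => ?_⟩
  rw [Finset.mem_Ico] at hn
  by_cases hnq : n < n₀ + q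
  · have hstep := fract_lt_fract_add_add_intCast hp (by linarith) (round (p * α))
    rw [show y + n * α + (p * α - round (p * α)) + round (p * α) = y + ((n + p : ℕ) : ℝ) * α by
      push_cast; ring] at hstep
    exact (hmax (n + p) (Finset.mem_Ico.2 (by omega))).not_gt hstep
  · have hstep := fract_lt_fract_add_add_intCast (neg_pos.2 hq) (by linarith) (-round (q * α))
    rw [show y + n * α + -(q * α - round (q * α)) + ((-round (q * α) : ℤ) : ℝ)
        = y + ((n - q : ℕ) : ℝ) * α by rw [Nat.cast_sub (by omega)]; push_cast; ring] at hstep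
    exact (hmax (n - q) (Finset.mem_Ico.2 (by omega))).not_gt hstep

lemma floor_ne_floor_iff {a b : ℝ} (hab : a ≤ b) : ⌊a⌋ ≠ ⌊b⌋ ↔ 1 - (b - a) ≤ Int.fract a := by
  rw [← (Int.floor_mono hab).lt_iff_ne, Int.lt_iff_add_one_le, Int.le_floor, Int.fract]
  push_cast
  constructor <;> intro h <;> linarith

lemma IsSparseBtw.of_gaps {a b : ℝ} {x : ℕ → ℤ}
    (hgap : ∀ n n', 0 < n → n < n' → x n ≠ 0 → x n' ≠ 0 → a ≤ (n' : ℝ) - n)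
    (hwin : ∀ n₀ : ℕ, ∃ n, n₀ < n ∧ (n : ℝ) ≤ n₀ + b ∧ x n ≠ 0) : IsSparseBtw a b x := by
  -- `k` must start at `0`, so enumerate the support of `x` together with `0`.
  set P : ℕ → Prop := fun n => n = 0 ∨ x n ≠ 0
  have hinf : (Set.ofPred P).Infinite := Set.infinite_of_forall_exists_gt fun n₀ =>
    let ⟨n, hn, _, hx⟩ := hwin n₀; ⟨n, Or.inr hx, hn⟩
  have hmono := Nat.nth_strictMono hinf
  have h0 : Nat.nth P 0 = 0 := Nat.nth_zero_of_zero (Or.inl rfl)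
  have hpos {m : ℕ} (hm : 1 ≤ m) : 0 < Nat.nth P m := h0 ▸ hmono (by omega)
  have hx {m : ℕ} (hm : 1 ≤ m) : x (Nat.nth P m) ≠ 0 :=
    (Nat.nth_mem_of_infinite hinf m).resolve_left (hpos hm).ne'
  refine ⟨Nat.nth P, hmono, h0, fun n hn => ⟨fun hxn => ?_, ?_⟩, fun m hm => ?_, fun m => ?_⟩
  · obtain ⟨m, rfl⟩ := Nat.subset_range_nth (p := P) (Or.inr hxn)
    exact ⟨m, Nat.one_le_iff_ne_zero.2 fun hm => by simp [hm, h0] at hn, rfl⟩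
  · rintro ⟨m, hm, rfl⟩
    exact hx hm
  · exact hgap _ _ (hpos hm) (hmono (by omega)) (hx hm) (hx (by omega))
  · obtain ⟨n, hlt, hle, hxn⟩ := hwin (Nat.nth P m)
    have : Nat.nth P (m + 1) ≤ n :=
      not_lt.1 fun h => (Nat.le_nth_of_lt_nth_succ h (Or.inr hxn)).not_gt hlt
    have : (Nat.nth P (m + 1) : ℝ) ≤ n := by exact_mod_cast this
    linarith

section BadlyApproximable

variable {α C : ℝ}

lemma one_div_mul_le_nint_natCast (hα : IsBadlyApproximableWith C α) {n : ℕ} (hn : 0 < n) :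
    1 / (C * n) ≤ nint (n * α) := by
  simpa using hα n (by exact_mod_cast hn.ne')

lemma exists_window_one_sub_le_fract (hC : 0 < C) (hα : IsBadlyApproximableWith C α)
    {δ : ℝ} (hδ : 0 < δ) (hδ1 : δ ≤ 1) (y : ℝ) :
    ∃ L : ℕ, (L : ℝ) ≤ (1 + C) / δ ∧
      ∀ n₀ : ℕ, ∃ n ∈ Finset.Ico n₀ (n₀ + L), 1 - δ ≤ Int.fract (y + n * α) := by
  have hpos {n : ℕ} (hn : 0 < n) : 0 < nint (n * α) :=
    lt_of_lt_of_le (by positivity) (one_div_mul_le_nint_natCast hα hn)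
  have h₁ := isLeast_csInf (approxDenoms_nonempty α hδ)
  set q₁ := sInf (approxDenoms α δ)
  have h₂ := isLeast_csInf (approxDenoms_nonempty α (hpos h₁.1.1))
  set q₂ := sInf (approxDenoms α (nint (q₁ * α)))
  have hq₁ : (q₁ : ℝ) ≤ 1 / δ := by
    rw [le_div_iff₀ hδ]; exact mul_le_one_of_isLeast h₁ hδ1
  have hq₂ : (q₂ : ℝ) ≤ C * q₁ := by
    have hq₁pos : (0 : ℝ) < q₁ := by exact_mod_cast h₁.1.1
    have h := mul_le_one_of_isLeast h₂ (h₁.1.2.le.trans hδ1)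
    have hbpq := one_div_mul_le_nint_natCast hα h₁.1.1
    rw [div_le_iff₀ (by positivity)] at hbpq
    nlinarith [hpos h₁.1.1]
  refine ⟨q₁ + q₂, ?_, fun n₀ => ?_⟩
  · calc ((q₁ + q₂ : ℕ) : ℝ) ≤ (1 + C) * q₁ := by push_cast; linarith
      _ ≤ (1 + C) * (1 / δ) := by gcongr
      _ = (1 + C) / δ := by ring
  have hs₁ : |q₁ * α - round (q₁ * α)| < δ := h₁.1.2
  have hs₂ : |q₂ * α - round (q₂ * α)| < δ := h₂.1.2.trans h₁.1.2
  rcases mul_neg_iff.1 (mul_neg_of_isLeast_nint h₁ h₂ (hpos h₂.1.1)) with ⟨hp, hq⟩ | ⟨hq, hp⟩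
  · rw [abs_lt] at hs₁ hs₂
    exact exists_mem_Ico_one_sub_le_fract y α δ hp hs₁.2.le hq hs₂.1.le n₀
  · rw [abs_lt] at hs₁ hs₂
    rw [add_comm q₁]
    exact exists_mem_Ico_one_sub_le_fract y α δ hp hs₂.2.le hq hs₁.1.le n₀

lemma div_le_sub_of_one_sub_le_fract (hC : 0 < C) (hα : IsBadlyApproximableWith C α)
    {δ y : ℝ} (hδ : 0 < δ) {n n' : ℕ} (hlt : n < n') (h : 1 - δ ≤ Int.fract (y + n * α))
    (h' : 1 - δ ≤ Int.fract (y + n' * α)) : 1 / C / δ ≤ (n' : ℝ) - n := by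
  have hd : (0 : ℝ) < n' - n := sub_pos.2 (by exact_mod_cast hlt)
  have hnint : nint (((n' - n : ℤ) : ℝ) * α) < δ :=
    calc nint (((n' - n : ℤ) : ℝ) * α)
        ≤ |((n' - n : ℤ) : ℝ) * α - ((⌊y + n' * α⌋ - ⌊y + n * α⌋ : ℤ) : ℝ)| := round_le _ _
      _ = |Int.fract (y + n' * α) - Int.fract (y + n * α)| := by
        rw [Int.fract, Int.fract]; push_cast; ring_nf
      _ < δ := by
        rw [abs_lt]
        constructor <;> linarith [Int.fract_lt_one (y + n * α), Int.fract_lt_one (y + n' * α)]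
  have hbound := (hα (n' - n) (by omega)).trans_lt hnint
  push_cast at hbound
  rw [abs_of_pos hd, div_lt_iff₀ (by positivity)] at hbound
  rw [div_le_iff₀ hδ, div_le_iff₀ hC]
  linarith

lemma isSparseBtw_of_ne_zero_iff (hC : 0 < C) (hα : IsBadlyApproximableWith C α)
    {δ : ℝ} (hδ : 0 < δ) (hδ1 : δ ≤ 1) (y : ℝ) {x : ℕ → ℤ}
    (hx : ∀ n : ℕ, x n ≠ 0 ↔ 1 - δ ≤ Int.fract (y + n * α)) :
    IsSparseBtw (1 / C / δ) ((1 + C) / δ) x := by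
  obtain ⟨L, hL, hwin⟩ := exists_window_one_sub_le_fract hC hα hδ hδ1 y
  refine IsSparseBtw.of_gaps (fun n n' _ hlt hn hn' =>
    div_le_sub_of_one_sub_le_fract hC hα hδ hlt ((hx n).1 hn) ((hx n').1 hn')) fun n₀ => ?_
  obtain ⟨n, hn, hhit⟩ := hwin (n₀ + 1)
  rw [Finset.mem_Ico] at hn
  refine ⟨n, by omega, ?_, (hx n).2 hhit⟩
  have : (n : ℝ) + 1 ≤ n₀ + 1 + L := by exact_mod_cast (by omega : n + 1 ≤ n₀ + 1 + L)
  linarith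

end BadlyApproximable

theorem stmt4_general (α : ℝ)
    (hbpq : ∃ C : ℝ, 0 < C ∧ ∀ n : ℤ, n ≠ 0 → 1 / (C * |(n : ℝ)|) ≤ nint ((n : ℝ) * α)) :
    ∃ C₁ C₂ : ℝ, 0 < C₁ ∧ 0 < C₂ ∧
      ∀ x x' : ℝ, 0 < |x - x'| → |x - x'| < 1 / 2 →
        IsSparseBtw (C₁ / |x - x'|) (C₂ / |x - x'|)
          (fun n : ℕ => ⌊x' + (n : ℝ) * α⌋ - ⌊x + (n : ℝ) * α⌋) := by
  obtain ⟨C, hC, hα⟩ := hbpq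
  refine ⟨1 / C, 1 + C, by positivity, by positivity, fun x x' hpos hhalf => ?_⟩
  rcases lt_or_gt_of_ne (sub_ne_zero.1 (abs_pos.1 hpos)) with h | h
  · rw [abs_sub_comm, abs_of_pos (sub_pos.2 h)] at hhalf ⊢
    refine isSparseBtw_of_ne_zero_iff hC hα (sub_pos.2 h) (by linarith) x fun n => ?_
    rw [sub_ne_zero, ne_comm, floor_ne_floor_iff (by linarith), add_sub_add_right_eq_sub]
  · rw [abs_of_pos (sub_pos.2 h)] at hhalf ⊢
    refine isSparseBtw_of_ne_zero_iff hC hα (sub_pos.2 h) (by linarith) x' fun n => ?_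
    rw [sub_ne_zero, floor_ne_floor_iff (by linarith), add_sub_add_right_eq_sub]

/-- **Lemma 7.1.** Let `α` be irrational with bounded partial quotients (equivalently,
`‖nα‖ ≥ 1/(C|n|)` for all `n ≠ 0` and some `C > 0`), and `N(x,x') = ⌊x'⌋ − ⌊x⌋`.  Then
there are `C₁, C₂ > 0` such that for all `x, x'` with `0 < |x − x'| < 1/2`, the sequence
`(N(x + nα, x' + nα))_{n ≥ 0}` is `(C₁/|x − x'|, C₂/|x − x'|)`-sparse. -/
theorem stmt4 (α : ℝ) (hirr : Irrational α)
    (hbpq : ∃ C : ℝ, 0 < C ∧ ∀ n : ℤ, n ≠ 0 → 1 / (C * |(n : ℝ)|) ≤ nint ((n : ℝ) * α)) :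
    ∃ C₁ C₂ : ℝ, 0 < C₁ ∧ 0 < C₂ ∧
      ∀ x x' : ℝ, 0 < |x - x'| → |x - x'| < 1 / 2 →
        IsSparseBtw (C₁ / |x - x'|) (C₂ / |x - x'|)
          (fun n : ℕ => ⌊x' + (n : ℝ) * α⌋ - ⌊x + (n : ℝ) * α⌋) :=
  stmt4_general α hbpq
end
end

section
/- Let (γ(n))_{n≥0} be an increasing sequence of real numbers with γ(0) ≥ 1 and γ(n) → ∞. Let α, β ∈ (0,1) be irrational numbers with continued-fraction denominator sequences (q_n) and (r_n) respectively, and suppose that 4·γ(n−1)·γ(n)·q_n ≤ r_n and 4·γ(n)²·r_n ≤ q_{n+1} for all n ≥ 1. Then 1, α, β are linearly independent over ℚ, i.e. there are no integers k, l, m with (k,l) ≠ (0,0) and kα + lβ = m; equivalently, the rotation T(x,y) = (x+α, y+β) of 𝕋² is ergodic. (Ergodicity claim proved in Section 9.) -/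
noncomputable section

/-- `(q n)` is the sequence of denominators of the continued fraction expansion of the
irrational `ξ ∈ (0,1)`: `q 0 = 1`, `q 1 = a 1`, `q (n+1) = a (n+1) q n + q (n-1)` for the
partial quotients `a n ≥ 1`, together with the standard properties
`1/(2 qₙ qₙ₊₁) < |ξ − pₙ/qₙ| < 1/(qₙ qₙ₊₁)`, `‖qₙ ξ‖ ≤ 1/qₙ₊₁` and the best-approximation
property `‖m ξ‖ ≥ ‖q_{n-1} ξ‖ ≥ 1/(2 qₙ)` for `0 < |m| < qₙ`. -/
def IsCFDenomSeq (ξ : ℝ) (q : ℕ → ℕ) : Prop :=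
  q 0 = 1 ∧
  (∃ a : ℕ → ℕ, (∀ n, 1 ≤ n → 1 ≤ a n) ∧ q 1 = a 1 ∧
    ∀ n, 1 ≤ n → q (n + 1) = a (n + 1) * q n + q (n - 1)) ∧
  (∀ n : ℕ, ∃ p : ℤ,
    1 / (2 * (q n : ℝ) * (q (n + 1) : ℝ)) < |ξ - (p : ℝ) / (q n : ℝ)| ∧
    |ξ - (p : ℝ) / (q n : ℝ)| < 1 / ((q n : ℝ) * (q (n + 1) : ℝ))) ∧
  (∀ n : ℕ, nint ((q n : ℝ) * ξ) ≤ 1 / (q (n + 1) : ℝ)) ∧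
  (∀ n : ℕ, 1 ≤ n → ∀ m : ℤ, m ≠ 0 → |m| < (q n : ℤ) →
    nint ((q (n - 1) : ℝ) * ξ) ≤ nint ((m : ℝ) * ξ) ∧
    1 / (2 * (q n : ℝ)) ≤ nint ((q (n - 1) : ℝ) * ξ))

/-!
If `k α + l β = m` with `k ≠ 0`, multiply by `rₙ`: then `k rₙ α ≡ -l (rₙ β)` modulo `1`, so
`‖k rₙ α‖ ≤ |l| ‖rₙ β‖ ≤ |l| / rₙ₊₁`. On the other hand `|k| rₙ < q_{n+1}` by the second growth
condition, so best approximation gives `‖k rₙ α‖ ≥ 1 / (2 q_{n+1})`, and the first growth condition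
at `n + 1` makes `rₙ₊₁ > 2 |l| q_{n+1}`, a contradiction once `γ(n) > |k| + |l|`.
The case `k = 0` is the same argument with the roles of `α` and `β` exchanged.
-/

lemma nint_add_intCast (x : ℝ) (z : ℤ) : nint (x + z) = nint x := by
  simp only [nint, round_add_intCast, Int.cast_add, add_sub_add_right_eq_sub]

lemma nint_intCast_mul_le (j : ℤ) (t : ℝ) : nint (j * t) ≤ |(j : ℝ)| * nint t :=
  calc nint (j * t) ≤ |j * t - ((j * round t : ℤ) : ℝ)| := round_le _ _
    _ = |(j : ℝ)| * nint t := by rw [nint, ← abs_mul]; push_cast; ring_nf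

namespace IsCFDenomSeq

variable {ξ : ℝ} {q : ℕ → ℕ}

lemma pos (h : IsCFDenomSeq ξ q) (n : ℕ) : 0 < q n := by
  obtain ⟨h0, ⟨a, ha, h1, hrec⟩, -⟩ := h
  induction n using Nat.strong_induction_on with
  | _ n ih =>
    match n with
    | 0 => simp [h0]
    | 1 => rw [h1]; exact ha 1 le_rfl
    | n + 2 =>
      rw [hrec (n + 1) (by omega)]
      exact Nat.add_pos_left (Nat.mul_pos (ha (n + 2) (by omega)) (ih (n + 1) (by omega))) _

lemma nint_mul_le (h : IsCFDenomSeq ξ q) (n : ℕ) : nint (q n * ξ) ≤ 1 / q (n + 1) :=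
  h.2.2.2.1 n

lemma one_div_two_mul_le_nint (h : IsCFDenomSeq ξ q) {n : ℕ} (hn : 1 ≤ n) {m : ℤ} (hm : m ≠ 0)
    (hmq : |m| < q n) : 1 / (2 * q n) ≤ nint (m * ξ) :=
  let ⟨hbest, hlower⟩ := h.2.2.2.2 n hn m hm hmq
  hlower.trans hbest

theorem intCast_mul_add_intCast_mul_ne_intCast {η : ℝ} {r : ℕ → ℕ} (hξ : IsCFDenomSeq ξ q)
    (hη : IsCFDenomSeq η r) {k l m : ℤ} (hk : k ≠ 0) {i j : ℕ} (hj : 1 ≤ j)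
    (hkr : |(k : ℝ)| * r i < q j) (hlq : 2 * |(l : ℝ)| * q j < r (i + 1)) :
    (k : ℝ) * ξ + l * η ≠ m := by
  intro heq
  have hri : 0 < r i := hη.pos i
  have hqj : (0 : ℝ) < q j := Nat.cast_pos.mpr (hξ.pos j)
  have hkr_ne : k * (r i : ℤ) ≠ 0 := mul_ne_zero hk (by exact_mod_cast hri.ne')
  have hkr_lt : |k * (r i : ℤ)| < q j := by
    rw [abs_mul, Nat.abs_cast]
    exact_mod_cast hkr
  have hlower := hξ.one_div_two_mul_le_nint hj hkr_ne hkr_lt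
  have hupper : nint (((k * r i : ℤ) : ℝ) * ξ) ≤ |(l : ℝ)| / r (i + 1) :=
    calc nint (((k * r i : ℤ) : ℝ) * ξ) = nint (((-l : ℤ) : ℝ) * (r i * η) + (m * r i : ℤ)) := by
          congr 1; push_cast; linear_combination (r i : ℝ) * heq
      _ = nint (((-l : ℤ) : ℝ) * (r i * η)) := nint_add_intCast _ _
      _ ≤ |(l : ℝ)| * nint (r i * η) := by simpa using nint_intCast_mul_le (-l) (r i * η)
      _ ≤ |(l : ℝ)| * (1 / r (i + 1)) := by gcongr; exact hη.nint_mul_le i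
      _ = |(l : ℝ)| / r (i + 1) := mul_one_div _ _
  have hri1 : (0 : ℝ) < r (i + 1) := Nat.cast_pos.mpr (hη.pos (i + 1))
  have := hlower.trans hupper
  rw [div_le_div_iff₀ (by positivity) hri1] at this
  linarith

end IsCFDenomSeq

theorem stmt5_general (γ : ℕ → ℝ) (hγ0 : 1 ≤ γ 0) (hγmono : Monotone γ)
    (hγtop : Filter.Tendsto γ Filter.atTop Filter.atTop)
    (α β : ℝ)
    (q r : ℕ → ℕ) (hq : IsCFDenomSeq α q) (hr : IsCFDenomSeq β r)
    (h42 : ∀ n : ℕ, 1 ≤ n →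
      4 * γ (n - 1) * γ n * (q n : ℝ) ≤ (r n : ℝ) ∧
      4 * (γ n) ^ 2 * (r n : ℝ) ≤ (q (n + 1) : ℝ)) :
    ∀ k l m : ℤ, (k, l) ≠ (0, 0) → (k : ℝ) * α + (l : ℝ) * β ≠ (m : ℝ) := by
  intro k l m hkl
  have hγ1 (j : ℕ) : 1 ≤ γ j := hγ0.trans (hγmono j.zero_le)
  obtain ⟨n, hγn, hn1⟩ := ((hγtop.eventually_gt_atTop (|(k : ℝ)| + |(l : ℝ)|)).and
    (Filter.eventually_ge_atTop 1)).exists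
  have hqn : (0 : ℝ) < q n := Nat.cast_pos.mpr (hq.pos n)
  have hqn1 : (0 : ℝ) < q (n + 1) := Nat.cast_pos.mpr (hq.pos (n + 1))
  have hk_lt : |(k : ℝ)| < γ n := by linarith [abs_nonneg (l : ℝ)]
  have hl_lt : |(l : ℝ)| < γ n := by linarith [abs_nonneg (k : ℝ)]
  rcases eq_or_ne k 0 with rfl | hk
  · have hl : l ≠ 0 := by rintro rfl; exact hkl rfl
    rw [add_comm]
    refine hr.intCast_mul_add_intCast_mul_ne_intCast hq hl hn1 ?_ (by simpa using hqn1)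
    calc |(l : ℝ)| * q n < γ n * q n := by gcongr
      _ ≤ 4 * γ (n - 1) * γ n * q n := by gcongr; nlinarith [hγ1 (n - 1), hγ1 n]
      _ ≤ r n := (h42 n hn1).1
  · refine hq.intCast_mul_add_intCast_mul_ne_intCast hr hk (i := n) (j := n + 1) (by omega) ?_ ?_
    · calc |(k : ℝ)| * r n < γ n * r n := by gcongr; exact Nat.cast_pos.mpr (hr.pos n)
        _ ≤ 4 * γ n ^ 2 * r n := by gcongr; nlinarith [hγ1 n]
        _ ≤ q (n + 1) := (h42 n hn1).2
    · calc 2 * |(l : ℝ)| * q (n + 1) < 2 * γ n * q (n + 1) := by gcongr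
        _ ≤ 4 * γ n * γ (n + 1) * q (n + 1) := by
          gcongr ?_ * _; nlinarith [hγ1 n, hγ1 (n + 1)]
        _ ≤ r (n + 1) := (h42 (n + 1) (by omega)).1

/-- **Ergodicity claim of Section 9.** If `γ(n) ↑ ∞` with `γ(0) ≥ 1` and the continued
fraction denominators of the irrationals `α, β ∈ (0,1)` satisfy
`4 γ(n−1) γ(n) qₙ ≤ rₙ` and `4 γ(n)² rₙ ≤ q_{n+1}` for all `n ≥ 1`, then `1, α, β` are
linearly independent over `ℚ`, i.e. the rotation `T(x,y) = (x+α, y+β)` is ergodic. -/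
theorem stmt5 (γ : ℕ → ℝ) (hγ0 : 1 ≤ γ 0) (hγmono : Monotone γ)
    (hγtop : Filter.Tendsto γ Filter.atTop Filter.atTop)
    (α β : ℝ) (hα : Irrational α) (hβ : Irrational β)
    (hα01 : α ∈ Set.Ioo (0:ℝ) 1) (hβ01 : β ∈ Set.Ioo (0:ℝ) 1)
    (q r : ℕ → ℕ) (hq : IsCFDenomSeq α q) (hr : IsCFDenomSeq β r)
    (h42 : ∀ n : ℕ, 1 ≤ n →
      4 * γ (n - 1) * γ n * (q n : ℝ) ≤ (r n : ℝ) ∧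
      4 * (γ n) ^ 2 * (r n : ℝ) ≤ (q (n + 1) : ℝ)) :
    ∀ k l m : ℤ, (k, l) ≠ (0, 0) → (k : ℝ) * α + (l : ℝ) * β ≠ (m : ℝ) :=
  stmt5_general γ hγ0 hγmono hγtop α β q r hq hr h42
end
end

section
/- Let T be an ergodic automorphism of a standard probability Borel space (X, 𝓑, μ) which is rigid along an increasing sequence (q_n) of natural numbers, i.e. μ(T^{q_n}A ∩ A) → μ(A) for every A ∈ 𝓑. Let f : X → ℝ be a strictly positive integrable function, and suppose there exists C > 0 such that |∫_X e^{2πi s f^{(n)}(x)} dμ(x)| ≤ C/|s| for every real s ≠ 0 and all n large enough. Then for every real s ≠ 0 the equation ψ(Tx)/ψ(x) = e^{2πi s f(x)} has no measurable solution ψ : X → S¹ (and therefore the special flow T^f is weakly mixing). (Proposition 2.1.) -/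
/-!
If `ψ` solves `ψ ∘ T = e^{2πi s f} ψ`, then `ψ^k` solves the same equation for the frequency
`k s`, and iterating gives `∫ e^{2πi k s f⁽ⁿ⁾} dμ = ∫ ψ^k(Tⁿx) · conj(ψ^k(x)) dμ`. Rigidity makes
the right-hand side tend to `1` along `n = q_m`: a bounded function is uniformly close to a
function constant on the cells of a finite measurable partition, and rigidity says that
`T^{q_m}` moves almost no mass out of any cell. For `k > C/|s|` this contradicts the decay
bound `C/(k|s|) < 1`.
-/

open MeasureTheory Filter Topology ComplexConjugate

section Rigidity

variable {X : Type*} [MeasurableSpace X] {μ : Measure X} {S : ℕ → X → X}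

theorem exists_measurable_finite_partition_norm_sub_le {g : X → ℂ} (hg : Measurable g)
    (hg1 : ∀ x, ‖g x‖ ≤ 1) {ε : ℝ} (hε : 0 < ε) :
    ∃ (J : X → ℤ × ℤ) (s : Finset (ℤ × ℤ)), Measurable J ∧ (∀ x, J x ∈ s) ∧
      ∀ x y, J x = J y → ‖g x - g y‖ ≤ ε := by
  set δ := ε / 2
  have hδ : 0 < δ := half_pos hε
  have hcell : ∀ t : ℝ, |t| ≤ 1 → ⌊t / δ⌋ ∈ Finset.Icc ⌊-1 / δ⌋ ⌊1 / δ⌋ := fun t ht =>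
    Finset.mem_Icc.2 ⟨Int.floor_le_floor (div_le_div_of_nonneg_right (abs_le.1 ht).1 hδ.le),
      Int.floor_le_floor (div_le_div_of_nonneg_right (abs_le.1 ht).2 hδ.le)⟩
  have hclose : ∀ a b : ℝ, ⌊a / δ⌋ = ⌊b / δ⌋ → |a - b| ≤ δ := fun a b h => by
    have := Int.abs_sub_lt_one_of_floor_eq_floor h
    rw [← sub_div, abs_div, abs_of_pos hδ, div_lt_one hδ] at this
    exact this.le
  refine ⟨fun x => (⌊(g x).re / δ⌋, ⌊(g x).im / δ⌋),
    Finset.Icc ⌊-1 / δ⌋ ⌊1 / δ⌋ ×ˢ Finset.Icc ⌊-1 / δ⌋ ⌊1 / δ⌋, ?_, fun x => ?_, fun x y h => ?_⟩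
  · exact (((Complex.measurable_re.comp hg).div_const δ).floor).prodMk
      (((Complex.measurable_im.comp hg).div_const δ).floor)
  · exact Finset.mem_product.2 ⟨hcell _ ((Complex.abs_re_le_norm _).trans (hg1 x)),
      hcell _ ((Complex.abs_im_le_norm _).trans (hg1 x))⟩
  · obtain ⟨hre, him⟩ := Prod.ext_iff.1 h
    calc ‖g x - g y‖ ≤ |(g x - g y).re| + |(g x - g y).im| := Complex.norm_le_abs_re_add_abs_im _
      _ ≤ δ + δ := by
        rw [Complex.sub_re, Complex.sub_im]
        exact add_le_add (hclose _ _ hre) (hclose _ _ him)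
      _ = ε := add_halves ε

def IsRigidSequence (μ : Measure X) (S : ℕ → X → X) : Prop :=
  ∀ A, MeasurableSet A → Tendsto (fun n => μ (S n ⁻¹' A ∩ A)) atTop (𝓝 (μ A))

theorem tendsto_measure_setOf_comp_ne_of_rigid [IsFiniteMeasure μ] {ι : Type*}
    [MeasurableSpace ι] [MeasurableSingletonClass ι] {J : X → ι} (hJ : Measurable J)
    (s : Finset ι) (hs : ∀ x, J x ∈ s) (hSm : ∀ n, Measurable (S n))
    (hS : IsRigidSequence μ S) :
    Tendsto (fun n => μ {x | J (S n x) ≠ J x}) atTop (𝓝 0) := by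
  have hfib : ∀ j, MeasurableSet (J ⁻¹' {j}) := fun j => hJ (measurableSet_singleton j)
  have hdisj := Set.pairwiseDisjoint_fiber J (s : Set ι)
  have hmeas : ∀ n j, MeasurableSet (S n ⁻¹' (J ⁻¹' {j}) ∩ J ⁻¹' {j}) :=
    fun n j => (hSm n (hfib j)).inter (hfib j)
  have hunion : ∀ n, {x | J (S n x) ≠ J x} = (⋃ j ∈ s, S n ⁻¹' (J ⁻¹' {j}) ∩ J ⁻¹' {j})ᶜ := by
    intro n; ext x
    simp only [Set.mem_compl_iff, Set.mem_iUnion, Set.mem_inter_iff, Set.mem_preimage,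
      Set.mem_singleton_iff, exists_prop, not_exists, not_and]
    exact ⟨fun h j _ h₁ h₂ => h (h₁.trans h₂.symm), fun h h' => h _ (hs x) h' rfl⟩
  have hsum : ∑ j ∈ s, μ (J ⁻¹' {j}) = μ Set.univ := by
    rw [← measure_biUnion_finset hdisj fun j _ => hfib j]
    congr 1
    ext x
    simpa using hs x
  have hgood : Tendsto (fun n => μ (⋃ j ∈ s, S n ⁻¹' (J ⁻¹' {j}) ∩ J ⁻¹' {j})) atTop
      (𝓝 (μ Set.univ)) := by
    simp_rw [measure_biUnion_finset (hdisj.mono fun _ => Set.inter_subset_right)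
      fun j _ => hmeas _ j, ← hsum]
    exact tendsto_finsetSum _ fun j _ => hS _ (hfib j)
  simp_rw [hunion, measure_compl (Finset.measurableSet_biUnion s fun j _ => hmeas _ j)
    (measure_ne_top μ _)]
  simpa using ENNReal.Tendsto.sub (tendsto_const_nhds (x := μ Set.univ)) hgood
    (Or.inl (measure_ne_top μ _))

theorem tendsto_integral_norm_comp_sub_of_rigid [IsProbabilityMeasure μ] {g : X → ℂ}
    (hg : Measurable g) (hg1 : ∀ x, ‖g x‖ ≤ 1) (hSm : ∀ n, Measurable (S n))
    (hS : IsRigidSequence μ S) :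
    Tendsto (fun n => ∫ x, ‖g (S n x) - g x‖ ∂μ) atTop (𝓝 0) := by
  refine tendsto_order.2 ⟨fun a ha => Eventually.of_forall fun n =>
    ha.trans_le (integral_nonneg fun _ => norm_nonneg _), fun a ha => ?_⟩
  obtain ⟨J, s, hJ, hs, hJg⟩ := exists_measurable_finite_partition_norm_sub_le hg hg1 (half_pos ha)
  have hbad := tendsto_measure_setOf_comp_ne_of_rigid hJ s hs hSm hS
  filter_upwards [hbad.eventually_lt_const (ENNReal.ofReal_pos.2 (by positivity : 0 < a / 4))]
    with n hn
  set B := {x | J (S n x) ≠ J x}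
  have hB : MeasurableSet B := (measurableSet_eq_fun (hJ.comp (hSm n)) hJ).compl
  have hpoint : ∀ x, ‖g (S n x) - g x‖ ≤ a / 2 + B.indicator (fun _ => (2 : ℝ)) x := by
    intro x
    by_cases hx : x ∈ B
    · rw [Set.indicator_of_mem hx]
      calc ‖g (S n x) - g x‖ ≤ ‖g (S n x)‖ + ‖g x‖ := norm_sub_le _ _
        _ ≤ 2 := by linarith [hg1 (S n x), hg1 x]
        _ ≤ a / 2 + 2 := by linarith
    · rw [Set.indicator_of_notMem hx, add_zero]
      exact hJg _ _ (not_not.1 hx)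
  calc ∫ x, ‖g (S n x) - g x‖ ∂μ ≤ ∫ x, (a / 2 + B.indicator (fun _ => (2 : ℝ)) x) ∂μ :=
        integral_mono_of_nonneg (Eventually.of_forall fun _ => norm_nonneg _)
          ((integrable_const _).add ((integrable_const _).indicator hB))
          (Eventually.of_forall hpoint)
    _ = a / 2 + 2 * μ.real B := by
        rw [integral_add (integrable_const _) ((integrable_const _).indicator hB),
          integral_const, integral_indicator_const _ hB]
        simp [mul_comm]
    _ < a := by
        have : μ.real B < a / 4 := ENNReal.toReal_lt_of_lt_ofReal hn
        linarith

theorem tendsto_integral_comp_mul_conj_of_rigid [IsProbabilityMeasure μ] {g : X → ℂ}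
    (hg : Measurable g) (hg1 : ∀ x, ‖g x‖ = 1) (hSm : ∀ n, Measurable (S n))
    (hS : IsRigidSequence μ S) :
    Tendsto (fun n => ∫ x, g (S n x) * conj (g x) ∂μ) atTop (𝓝 1) := by
  have hgg : ∀ x, g x * conj (g x) = 1 := fun x => by
    rw [Complex.mul_conj', hg1]; norm_num
  have hint : ∀ h : X → ℂ, Measurable h → (∀ x, ‖h x‖ ≤ 1) →
      Integrable (fun x => h x * conj (g x)) μ := fun h hh hh1 =>
    Integrable.of_bound
      ((hh.mul (Complex.continuous_conj.measurable.comp hg)).aestronglyMeasurable) 1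
      (Eventually.of_forall fun x => by simpa [hg1] using hh1 x)
  refine tendsto_iff_norm_sub_tendsto_zero.2 (squeeze_zero (fun _ => norm_nonneg _) (fun n => ?_)
    (tendsto_integral_norm_comp_sub_of_rigid hg (fun x => (hg1 x).le) hSm hS))
  calc ‖∫ x, g (S n x) * conj (g x) ∂μ - 1‖
      = ‖∫ x, (g (S n x) - g x) * conj (g x) ∂μ‖ := by
        simp_rw [sub_mul]
        rw [integral_sub (hint (fun x => g (S n x)) (hg.comp (hSm n)) fun x => (hg1 _).le)
          (hint g hg fun x => (hg1 x).le)]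
        simp [hgg]
    _ ≤ ∫ x, ‖(g (S n x) - g x) * conj (g x)‖ ∂μ := norm_integral_le_integral_norm _
    _ = ∫ x, ‖g (S n x) - g x‖ ∂μ := by simp [hg1]

end Rigidity

theorem ae_apply_iterate_eq_exp_birkhoffSum_mul {X : Type*} [MeasurableSpace X]
    {μ : Measure X} {T : X → X} (hT : Measure.QuasiMeasurePreserving T μ μ) {ψ φ : X → ℂ}
    (h : ∀ᵐ x ∂μ, ψ (T x) = Complex.exp (φ x) * ψ x) (n : ℕ) :
    ∀ᵐ x ∂μ, ψ (T^[n] x) = Complex.exp (birkhoffSum T φ n x) * ψ x := by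
  induction n with
  | zero => simp
  | succ n ih =>
    filter_upwards [ih, (hT.iterate n).ae h] with x hn hstep
    rw [Function.iterate_succ_apply', hstep, hn, birkhoffSum_succ, Complex.exp_add]
    ring

theorem integral_exp_birkhoffSum_eq_integral_mul_conj {X : Type*} [MeasurableSpace X]
    {μ : Measure X} {T : X → X} (hT : Measure.QuasiMeasurePreserving T μ μ) {ψ φ : X → ℂ}
    (hψ1 : ∀ x, ‖ψ x‖ = 1) (h : ∀ᵐ x ∂μ, ψ (T x) = Complex.exp (φ x) * ψ x) (n : ℕ) :
    ∫ x, Complex.exp (birkhoffSum T φ n x) ∂μ = ∫ x, ψ (T^[n] x) * conj (ψ x) ∂μ := by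
  refine integral_congr_ae ?_
  filter_upwards [ae_apply_iterate_eq_exp_birkhoffSum_mul hT h n] with x hx
  rw [hx, mul_assoc, Complex.mul_conj', hψ1]
  simp

theorem stmt6_general {X : Type*} [MeasurableSpace X]
    (μ : Measure X) [IsProbabilityMeasure μ]
    (T : X ≃ᵐ X) (hT : Ergodic T μ)
    (q : ℕ → ℕ) (hq : StrictMono q)
    (hrig : ∀ A : Set X, MeasurableSet A →
      Filter.Tendsto (fun n => μ ((⇑T)^[q n] ⁻¹' A ∩ A)) Filter.atTop (nhds (μ A)))
    (f : X → ℝ)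
    (hdecay : ∃ C : ℝ, 0 < C ∧ ∀ s : ℝ, s ≠ 0 → ∃ n₀ : ℕ, ∀ n, n₀ ≤ n →
      ‖∫ x, Complex.exp (2 * Real.pi * Complex.I * s *
          (∑ k ∈ Finset.range n, f ((⇑T)^[k] x))) ∂μ‖ ≤ C / |s|) :
    ∀ s : ℝ, s ≠ 0 → ¬ ∃ ψ : X → ℂ, Measurable ψ ∧ (∀ x, ‖ψ x‖ = 1) ∧
      ∀ᵐ x ∂μ, ψ (T x) = Complex.exp (2 * Real.pi * Complex.I * s * f x) * ψ x := by
  rintro s hs ⟨ψ, hψm, hψ1, hψeq⟩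
  obtain ⟨C, hC, hdecay⟩ := hdecay
  obtain ⟨k, hk⟩ := exists_nat_gt (C / |s|)
  have hk0 : (0 : ℝ) < k := (div_nonneg hC.le (abs_nonneg s)).trans_lt hk
  have hks : C / |(k : ℝ) * s| < 1 := by
    rwa [abs_mul, Nat.abs_cast, mul_comm, ← div_div, div_lt_one hk0]
  set φ : X → ℂ := fun x => 2 * Real.pi * Complex.I * (k * s : ℝ) * f x
  have hpow : ∀ᵐ x ∂μ, ψ (T x) ^ k = Complex.exp (φ x) * ψ x ^ k := by
    filter_upwards [hψeq] with x hx
    rw [hx, mul_pow, ← Complex.exp_nat_mul]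
    congr 2
    simp only [φ]
    push_cast
    ring
  have hφ : ∀ n x, 2 * Real.pi * Complex.I * (k * s : ℝ) *
      (∑ j ∈ Finset.range n, f ((⇑T)^[j] x) : ℝ) = birkhoffSum T φ n x := fun n x => by
    rw [birkhoffSum, Complex.ofReal_sum, Finset.mul_sum]
  have hlim := tendsto_integral_comp_mul_conj_of_rigid (hψm.pow_const k)
    (fun x => by simp [hψ1]) (fun n => T.measurable.iterate (q n)) hrig
  obtain ⟨n₀, hn₀⟩ := hdecay (k * s) (mul_ne_zero hk0.ne' hs)
  have hbound : ∀ᶠ n in atTop, ‖∫ x, ψ (T^[q n] x) ^ k * conj (ψ x ^ k) ∂μ‖ ≤ C / |k * s| := by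
    filter_upwards [hq.tendsto_atTop.eventually_ge_atTop n₀] with n hn
    rw [← integral_exp_birkhoffSum_eq_integral_mul_conj (ψ := fun x => ψ x ^ k)
      hT.toMeasurePreserving.quasiMeasurePreserving (fun x => by simp [hψ1]) hpow]
    simpa only [hφ] using hn₀ (q n) hn
  exact hks.not_ge (by simpa using le_of_tendsto hlim.norm hbound)

/-- **Proposition 2.1.** Let `T` be an ergodic automorphism of a standard probability
Borel space which is rigid along `(q_n)`, and let `f > 0` be integrable.  If there is
`C > 0` such that `|∫ e^{2πi s f⁽ⁿ⁾} dμ| ≤ C/|s|` for every `s ≠ 0` and all `n` large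
enough, then for every `s ≠ 0` the eigenvalue equation `ψ(Tx)/ψ(x) = e^{2πi s f(x)}` has
no measurable circle-valued solution (hence the special flow `T^f` is weakly mixing). -/
theorem stmt6 {X : Type*} [MeasurableSpace X] [StandardBorelSpace X]
    (μ : Measure X) [IsProbabilityMeasure μ]
    (T : X ≃ᵐ X) (hT : Ergodic T μ)
    (q : ℕ → ℕ) (hq : StrictMono q)
    (hrig : ∀ A : Set X, MeasurableSet A →
      Filter.Tendsto (fun n => μ ((⇑T)^[q n] ⁻¹' A ∩ A)) Filter.atTop (nhds (μ A)))
    (f : X → ℝ) (hfm : Measurable f) (hfi : Integrable f μ) (hfpos : ∀ x, 0 < f x)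
    (hdecay : ∃ C : ℝ, 0 < C ∧ ∀ s : ℝ, s ≠ 0 → ∃ n₀ : ℕ, ∀ n, n₀ ≤ n →
      ‖∫ x, Complex.exp (2 * Real.pi * Complex.I * s *
          (∑ k ∈ Finset.range n, f ((⇑T)^[k] x))) ∂μ‖ ≤ C / |s|) :
    ∀ s : ℝ, s ≠ 0 → ¬ ∃ ψ : X → ℂ, Measurable ψ ∧ (∀ x, ‖ψ x‖ = 1) ∧
      ∀ᵐ x ∂μ, ψ (T x) = Complex.exp (2 * Real.pi * Complex.I * s * f x) * ψ x :=
  stmt6_general μ T hT q hq hrig f hdecay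
end

section
/- Let h : 𝕋 → ℝ be a piecewise absolutely continuous map with N discontinuities. Suppose that h' : 𝕋 → ℝ is of bounded variation and |h'(x)| ≥ θ > 0 for all x ∈ 𝕋 (off the discontinuity set). Then |∫_𝕋 e^{2πi h(x)} dx| ≤ N/(πθ) + Var h'/(2πθ²). (Lemma 3.1.) -/
/-!
On each piece `h` is differentiable with `|h'| ≥ θ`, so `e^{2πih} = (2πi)⁻¹ φ · (e^{2πih})'` with
`φ = 1/h'`. Integrating by parts against the function `φ`, which is bounded by `1/θ` and of
variation at most `Var h' / θ²` (inversion is `θ⁻²`-Lipschitz on `{|y| ≥ θ}`), bounds the integral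
over the piece by `(2/θ + Var h' / θ²) / 2π`; summing over the `N` pieces gives the claim.

Since `φ` is merely of bounded variation, the integration by parts is done by hand: on a partition
`x₀ < ⋯ < xₙ`, freezing `φ` at the left end of each cell turns `∫ φ G'` into the Abel sum
`∑ φ(xᵢ) (G(xᵢ₊₁) - G(xᵢ))`, bounded by `sup ‖G‖ · (|φ(x₀)| + |φ(xₙ)| + Var φ)`, up to an error
of at most `Var φ · maxᵢ ∫_{cell i} ‖G'‖`, which is small for fine partitions. The pieces are open
intervals, on which `h` need not extend; they are exhausted by closed subintervals.
-/

open MeasureTheory Set Finset Filter Topology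
open scoped ENNReal

lemma norm_cexp_two_pi_I_mul (t : ℝ) : ‖Complex.exp (2 * Real.pi * Complex.I * t)‖ = 1 := by
  rw [show (2 * Real.pi * Complex.I * t : ℂ) = ((2 * Real.pi * t : ℝ) : ℂ) * Complex.I by
    push_cast; ring]
  exact Complex.norm_exp_ofReal_mul_I _

lemma le_of_forall_mem_Ioo_le_add_mul {x y c δ : ℝ} (hδ : 0 < δ)
    (h : ∀ ε ∈ Ioo 0 δ, x ≤ y + c * ε) : x ≤ y := by
  have hlim : Tendsto (fun ε => y + c * ε) (𝓝[>] 0) (𝓝 y) := by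
    simpa using ((by fun_prop : Continuous fun ε : ℝ => y + c * ε).tendsto 0).mono_left
      nhdsWithin_le_nhds
  exact ge_of_tendsto hlim (eventually_of_mem (Ioo_mem_nhdsGT hδ) h)

section SummationByParts

variable {E : Type*} [NormedAddCommGroup E] [NormedSpace ℝ E]

lemma Finset.sum_range_smul_sub_by_parts (c : ℕ → ℝ) (g : ℕ → E) (n : ℕ) :
    ∑ i ∈ range n, c i • (g (i + 1) - g i) =
      c n • g n - c 0 • g 0 - ∑ i ∈ range n, (c (i + 1) - c i) • g (i + 1) := by
  induction n with
  | zero => simp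
  | succ n ih =>
    rw [sum_range_succ, sum_range_succ, ih, smul_sub, sub_smul]
    abel

lemma norm_sum_range_smul_sub_le {c : ℕ → ℝ} {g : ℕ → E} {n : ℕ} {C : ℝ}
    (hg : ∀ i ≤ n, ‖g i‖ ≤ C) :
    ‖∑ i ∈ range n, c i • (g (i + 1) - g i)‖ ≤
      C * (|c 0| + |c n| + ∑ i ∈ range n, |c (i + 1) - c i|) := by
  have hterm : ∀ i ≤ n, ∀ d : ℝ, ‖d • g i‖ ≤ C * |d| := fun i hi d => by
    rw [norm_smul, Real.norm_eq_abs, mul_comm]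
    exact mul_le_mul_of_nonneg_right (hg i hi) (abs_nonneg d)
  have hsum : ‖∑ i ∈ range n, (c (i + 1) - c i) • g (i + 1)‖ ≤
      C * ∑ i ∈ range n, |c (i + 1) - c i| := by
    rw [mul_sum]
    refine (norm_sum_le _ _).trans (sum_le_sum fun i hi => hterm _ ?_ _)
    exact mem_range.1 hi
  rw [sum_range_smul_sub_by_parts]
  calc _ ≤ ‖c n • g n‖ + ‖c 0 • g 0‖ + ‖∑ i ∈ range n, (c (i + 1) - c i) • g (i + 1)‖ :=
        (norm_sub_le _ _).trans (add_le_add_left (norm_sub_le _ _) _)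
    _ ≤ C * |c n| + C * |c 0| + C * ∑ i ∈ range n, |c (i + 1) - c i| := by
        gcongr
        exacts [hterm n le_rfl _, hterm 0 n.zero_le _]
    _ = _ := by ring

end SummationByParts

lemma lipschitzOnWith_inv_of_le_norm {𝕜 : Type*} [NormedField 𝕜] {r : ℝ} (hr : 0 < r) :
    LipschitzOnWith (r ^ 2)⁻¹.toNNReal (Inv.inv : 𝕜 → 𝕜) {z | r ≤ ‖z‖} := by
  refine LipschitzOnWith.of_dist_le_mul fun z hz w hw => ?_
  have hz0 : z ≠ 0 := norm_pos_iff.1 (hr.trans_le hz)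
  have hw0 : w ≠ 0 := norm_pos_iff.1 (hr.trans_le hw)
  rw [dist_inv_inv₀ hz0 hw0, div_eq_mul_inv, mul_comm, Real.coe_toNNReal _ (by positivity), sq]
  gcongr
  exacts [hz, hw]

lemma eVariationOn_inv_le {f : ℝ → ℝ} {s : Set ℝ} {θ : ℝ} (hθ : 0 < θ)
    (hf : ∀ x ∈ s, θ ≤ |f x|) :
    eVariationOn (fun x => (f x)⁻¹) s ≤ ENNReal.ofReal (θ ^ 2)⁻¹ * eVariationOn f s :=
  (lipschitzOnWith_inv_of_le_norm hθ).comp_eVariationOn_le hf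

lemma ContinuousOn.intervalIntegrable_of_Ioo {E : Type*} [NormedAddCommGroup E] {f : ℝ → E}
    {a b C : ℝ} (hab : a ≤ b) (hf : ContinuousOn f (Ioo a b)) (hC : ∀ x ∈ Ioo a b, ‖f x‖ ≤ C) :
    IntervalIntegrable f volume a b := by
  rw [intervalIntegrable_iff_integrableOn_Ioo_of_le hab]
  exact IntegrableOn.of_bound measure_Ioo_lt_top (hf.aestronglyMeasurable measurableSet_Ioo) C
    (ae_restrict_of_forall_mem measurableSet_Ioo hC)

lemma exists_partition_integral_le {g : ℝ → ℝ} {a b ε : ℝ} (hab : a ≤ b)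
    (hg : IntervalIntegrable g volume a b) (hε : 0 < ε) :
    ∃ (n : ℕ) (x : ℕ → ℝ), Monotone x ∧ x 0 = a ∧ x n = b ∧
      ∀ i < n, ∫ t in x i..x (i + 1), g t ≤ ε := by
  have hprim := intervalIntegral.continuousOn_primitive_interval' hg left_mem_uIcc
  rw [uIcc_of_le hab] at hprim
  obtain ⟨δ, hδ, hδε⟩ := Metric.uniformContinuousOn_iff.1
    (isCompact_Icc.uniformContinuousOn_of_continuous hprim) ε hε
  obtain ⟨n, hn⟩ := exists_nat_gt ((b - a) / δ)
  have hn0 : (0 : ℝ) < n := (div_nonneg (sub_nonneg.2 hab) hδ.le).trans_lt hn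
  set x : ℕ → ℝ := fun i => a + i * ((b - a) / n)
  have hx : Monotone x := fun i j hij => by
    simp only [x]; gcongr
  have hxn : x n = b := by simp only [x]; field_simp; ring
  have hmem : ∀ i ≤ n, x i ∈ Icc a b := fun i hi =>
    ⟨by simpa [x] using hx i.zero_le, hxn ▸ hx hi⟩
  refine ⟨n, x, hx, by simp [x], hxn, fun i hi => ?_⟩
  have hint : ∀ j ≤ n, IntervalIntegrable g volume a (x j) := fun j hj =>
    hg.mono_set (uIcc_subset_uIcc left_mem_uIcc (by rw [uIcc_of_le hab]; exact hmem j hj))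
  rw [← intervalIntegral.integral_interval_sub_left (hint _ hi) (hint _ hi.le)]
  refine (le_abs_self _).trans (le_of_lt ?_)
  rw [← Real.dist_eq]
  refine hδε _ (hmem _ hi) _ (hmem _ hi.le) ?_
  have hstep : x (i + 1) - x i = (b - a) / n := by simp only [x]; push_cast; ring
  rw [Real.dist_eq, hstep, abs_of_nonneg (div_nonneg (sub_nonneg.2 hab) hn0.le),
    div_lt_iff₀ hn0, ← div_lt_iff₀' hδ]
  exact hn

section IntegrationByParts

variable {E : Type*} [NormedAddCommGroup E] [NormedSpace ℝ E] {φ : ℝ → ℝ} {G G' : ℝ → E}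

lemma integral_smul_eq_smul_sub_add [CompleteSpace E] {u v : ℝ} (huv : u ≤ v)
    (hG : ∀ t ∈ Icc u v, HasDerivAt G (G' t) t) (hG' : IntervalIntegrable G' volume u v)
    (hφG' : IntervalIntegrable (fun t => φ t • G' t) volume u v) :
    ∫ t in u..v, φ t • G' t = φ u • (G v - G u) + ∫ t in u..v, (φ t - φ u) • G' t := by
  have hFTC : ∫ t in u..v, G' t = G v - G u :=
    intervalIntegral.integral_eq_sub_of_hasDerivAt (by rwa [uIcc_of_le huv]) hG'
  simp only [sub_smul]
  have hconst : IntervalIntegrable (fun t => φ u • G' t) volume u v := hG'.smul (φ u)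
  rw [intervalIntegral.integral_sub hφG' hconst, intervalIntegral.integral_smul, hFTC]
  abel

lemma norm_integral_sub_smul_le {u v : ℝ} (huv : u ≤ v) (hφ : BoundedVariationOn φ (Icc u v))
    (hG' : IntervalIntegrable G' volume u v) :
    ‖∫ t in u..v, (φ t - φ u) • G' t‖ ≤
      (eVariationOn φ (Icc u v)).toReal * ∫ t in u..v, ‖G' t‖ := by
  rw [← intervalIntegral.integral_const_mul]
  refine intervalIntegral.norm_integral_le_of_norm_le huv (Eventually.of_forall fun t ht => ?_)
    (hG'.norm.const_mul _)
  rw [norm_smul, Real.norm_eq_abs, ← Real.dist_eq]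
  gcongr
  exact hφ.dist_le ⟨ht.1.le, ht.2⟩ ⟨le_rfl, huv⟩

lemma norm_integral_smul_le_of_partition [CompleteSpace E] {x : ℕ → ℝ} (hx : Monotone x)
    {n : ℕ} {C ε : ℝ}
    (hG : ∀ t ∈ Icc (x 0) (x n), HasDerivAt G (G' t) t)
    (hG' : IntervalIntegrable G' volume (x 0) (x n))
    (hGC : ∀ t ∈ Icc (x 0) (x n), ‖G t‖ ≤ C)
    (hφ : BoundedVariationOn φ (Icc (x 0) (x n)))
    (hφG' : IntervalIntegrable (fun t => φ t • G' t) volume (x 0) (x n))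
    (hε : ∀ i < n, ∫ t in x i..x (i + 1), ‖G' t‖ ≤ ε) :
    ‖∫ t in x 0..x n, φ t • G' t‖ ≤
      C * (|φ (x 0)| + |φ (x n)| + (eVariationOn φ (Icc (x 0) (x n))).toReal) +
        (eVariationOn φ (Icc (x 0) (x n))).toReal * ε := by
  set V : ℕ → ℝ := fun i => (eVariationOn φ (Icc (x i) (x (i + 1)))).toReal
  have hsub : ∀ i < n, Icc (x i) (x (i + 1)) ⊆ Icc (x 0) (x n) := fun i hi =>
    Icc_subset_Icc (hx i.zero_le) (hx hi)
  have huIcc : ∀ i < n, uIcc (x i) (x (i + 1)) ⊆ uIcc (x 0) (x n) := fun i hi => by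
    rw [uIcc_of_le (hx i.le_succ), uIcc_of_le (hx n.zero_le)]
    exact hsub i hi
  have hVsum : ∑ i ∈ range n, V i = (eVariationOn φ (Icc (x 0) (x n))).toReal := by
    rw [← ENNReal.toReal_sum fun i hi => hφ.mono (hsub i (mem_range.1 hi)),
      eVariationOn.sum' φ hx]
  have hjump : ∀ i ∈ range n, |φ (x (i + 1)) - φ (x i)| ≤ V i := fun i hi =>
    (hφ.mono (hsub i (mem_range.1 hi))).dist_le ⟨hx i.le_succ, le_rfl⟩ ⟨le_rfl, hx i.le_succ⟩
  have hC : 0 ≤ C := (norm_nonneg _).trans (hGC _ ⟨le_rfl, hx n.zero_le⟩)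
  have habel := norm_sum_range_smul_sub_le (c := fun i => φ (x i)) (g := fun i => G (x i))
    fun i hi => hGC _ ⟨hx i.zero_le, hx hi⟩
  have herr : ‖∑ i ∈ range n, ∫ t in x i..x (i + 1), (φ t - φ (x i)) • G' t‖ ≤
      ∑ i ∈ range n, V i * ε := by
    refine (norm_sum_le _ _).trans (sum_le_sum fun i hi => ?_)
    have hi := mem_range.1 hi
    exact (norm_integral_sub_smul_le (hx i.le_succ) (hφ.mono (hsub i hi))
      (hG'.mono_set (huIcc i hi))).trans
      (mul_le_mul_of_nonneg_left (hε i hi) ENNReal.toReal_nonneg)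
  rw [← intervalIntegral.sum_integral_adjacent_intervals fun i hi => hφG'.mono_set (huIcc i hi),
    sum_congr rfl fun i hi => integral_smul_eq_smul_sub_add (hx i.le_succ)
      (fun t ht => hG t (hsub i (mem_range.1 hi) ht)) (hG'.mono_set (huIcc i (mem_range.1 hi)))
      (hφG'.mono_set (huIcc i (mem_range.1 hi))), sum_add_distrib]
  calc _ ≤ _ := norm_add_le _ _
    _ ≤ C * (|φ (x 0)| + |φ (x n)| + ∑ i ∈ range n, V i) + ∑ i ∈ range n, V i * ε := by
      refine add_le_add (habel.trans ?_) herr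
      gcongr with i hi
      exact hjump i hi
    _ = _ := by rw [← sum_mul, hVsum]

lemma norm_integral_smul_le [CompleteSpace E] {a b C : ℝ} (hab : a ≤ b)
    (hG : ∀ t ∈ Icc a b, HasDerivAt G (G' t) t) (hG' : IntervalIntegrable G' volume a b)
    (hGC : ∀ t ∈ Icc a b, ‖G t‖ ≤ C) (hφ : BoundedVariationOn φ (Icc a b))
    (hφm : AEStronglyMeasurable φ (volume.restrict (Ioc a b))) :
    ‖∫ t in a..b, φ t • G' t‖ ≤ C * (|φ a| + |φ b| + (eVariationOn φ (Icc a b)).toReal) := by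
  have hφG' : IntervalIntegrable (fun t => φ t • G' t) volume a b := by
    rw [intervalIntegrable_iff_integrableOn_Ioc_of_le hab]
    refine hG'.1.bdd_smul (|φ a| + (eVariationOn φ (Icc a b)).toReal) hφm ?_
    filter_upwards [ae_restrict_mem measurableSet_Ioc] with t ht
    have := hφ.dist_le ⟨ht.1.le, ht.2⟩ ⟨le_rfl, hab⟩
    rw [Real.norm_eq_abs]
    rw [Real.dist_eq] at this
    linarith [abs_sub_abs_le_abs_sub (φ t) (φ a)]
  refine le_of_forall_mem_Ioo_le_add_mul (c := (eVariationOn φ (Icc a b)).toReal) one_pos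
    fun ε hε => ?_
  obtain ⟨n, x, hx, rfl, rfl, hxε⟩ := exists_partition_integral_le hab hG'.norm hε.1
  exact norm_integral_smul_le_of_partition hx hG hG' hGC hφ hφG' hxε

end IntegrationByParts

lemma norm_integral_le_of_forall_Icc_subset_Ioo {E : Type*} [NormedAddCommGroup E]
    [NormedSpace ℝ E] {f : ℝ → E} {α β B C : ℝ} (hαβ : α < β)
    (hf : IntervalIntegrable f volume α β) (hfC : ∀ x, ‖f x‖ ≤ C)
    (hB : ∀ u v, α < u → u ≤ v → v < β → ‖∫ x in u..v, f x‖ ≤ B) :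
    ‖∫ x in α..β, f x‖ ≤ B := by
  refine le_of_forall_mem_Ioo_le_add_mul (c := 2 * C) (half_pos (sub_pos.2 hαβ)) fun ε hε => ?_
  obtain ⟨hε0, hεβ⟩ := hε
  have hint : ∀ u ∈ Icc α β, ∀ v ∈ Icc α β, IntervalIntegrable f volume u v :=
    fun u hu v hv => hf.mono_set (uIcc_subset_uIcc (by rwa [uIcc_of_le hαβ.le])
      (by rwa [uIcc_of_le hαβ.le]))
  have htail : ∀ u v, u ≤ v → ‖∫ x in u..v, f x‖ ≤ C * (v - u) := fun u v huv => by
    have := intervalIntegral.norm_integral_le_of_norm_le_const (a := u) (b := v) fun x _ => hfC x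
    rwa [abs_of_nonneg (sub_nonneg.2 huv)] at this
  rw [← intervalIntegral.integral_add_adjacent_intervals
      (hint α ⟨le_rfl, hαβ.le⟩ (α + ε) ⟨by linarith, by linarith⟩)
      (hint (α + ε) ⟨by linarith, by linarith⟩ β ⟨hαβ.le, le_rfl⟩),
    ← intervalIntegral.integral_add_adjacent_intervals
      (hint (α + ε) ⟨by linarith, by linarith⟩ (β - ε) ⟨by linarith, by linarith⟩)
      (hint (β - ε) ⟨by linarith, by linarith⟩ β ⟨hαβ.le, le_rfl⟩)]
  calc _ ≤ ‖∫ x in α..α + ε, f x‖ + (‖∫ x in α + ε..β - ε, f x‖ + ‖∫ x in β - ε..β, f x‖) :=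
        (norm_add_le _ _).trans (add_le_add_right (norm_add_le _ _) _)
    _ ≤ C * (α + ε - α) + (B + C * (β - (β - ε))) := by
        gcongr
        exacts [htail _ _ (by linarith), hB _ _ (by linarith) (by linarith) (by linarith),
          htail _ _ (by linarith)]
    _ = B + 2 * C * ε := by ring

lemma HasDerivAt.cexp_two_pi_I_mul {h : ℝ → ℝ} {h'x x : ℝ} (hd : HasDerivAt h h'x x) :
    HasDerivAt (fun y => Complex.exp (2 * Real.pi * Complex.I * h y))
      (Complex.exp (2 * Real.pi * Complex.I * h x) * (2 * Real.pi * Complex.I * h'x)) x :=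
  (hd.ofReal_comp.const_mul (2 * Real.pi * Complex.I)).cexp

lemma intervalIntegrable_cexp_two_pi_I_mul {h h' : ℝ → ℝ} {a b : ℝ} (hab : a ≤ b)
    (hd : ∀ x ∈ Ioo a b, HasDerivAt h (h' x) x) :
    IntervalIntegrable (fun x => Complex.exp (2 * Real.pi * Complex.I * h x)) volume a b :=
  ContinuousOn.intervalIntegrable_of_Ioo hab
    (fun x hx => (hd x hx).cexp_two_pi_I_mul.continuousAt.continuousWithinAt)
    fun x _ => (norm_cexp_two_pi_I_mul (h x)).le

lemma norm_integral_cexp_le_Icc {h h' : ℝ → ℝ} {a b θ : ℝ} (hab : a ≤ b)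
    (hd : ∀ x ∈ Icc a b, HasDerivAt h (h' x) x) (hi : IntervalIntegrable h' volume a b)
    (hBV : BoundedVariationOn h' (Icc a b)) (hθ : 0 < θ) (hlow : ∀ x ∈ Icc a b, θ ≤ |h' x|) :
    ‖∫ x in a..b, Complex.exp (2 * Real.pi * Complex.I * h x)‖ ≤
      1 / (Real.pi * θ) + (eVariationOn h' (Icc a b)).toReal / (2 * Real.pi * θ ^ 2) := by
  set G : ℝ → ℂ := fun x => Complex.exp (2 * Real.pi * Complex.I * h x)
  set G' : ℝ → ℂ := fun x => G x * (2 * Real.pi * Complex.I * h' x)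
  set V := (eVariationOn h' (Icc a b)).toReal
  have hG : ∀ x ∈ Icc a b, HasDerivAt G (G' x) x := fun x hx => (hd x hx).cexp_two_pi_I_mul
  have hG1 : ∀ x, ‖G x‖ = 1 := fun x => norm_cexp_two_pi_I_mul (h x)
  have hG' : IntervalIntegrable G' volume a b := by
    rw [intervalIntegrable_iff_integrableOn_Ioc_of_le hab]
    refine (hi.1.ofReal.const_mul (2 * Real.pi * Complex.I)).bdd_mul (c := 1) ?_
      (ae_of_all _ fun x => (hG1 x).le)
    exact ((continuousOn_of_forall_continuousAt fun x hx => (hG x hx).continuousAt)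
      |>.aestronglyMeasurable measurableSet_Icc).mono_measure
      (Measure.restrict_mono Set.Ioc_subset_Icc_self le_rfl)
  have hvar := eVariationOn_inv_le hθ hlow
  have hinvBV : BoundedVariationOn (fun x => (h' x)⁻¹) (Icc a b) :=
    ne_top_of_le_ne_top (ENNReal.mul_ne_top ENNReal.ofReal_ne_top hBV) hvar
  have hinvV : (eVariationOn (fun x => (h' x)⁻¹) (Icc a b)).toReal ≤ (θ ^ 2)⁻¹ * V := by
    have := ENNReal.toReal_mono (ENNReal.mul_ne_top ENNReal.ofReal_ne_top hBV) hvar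
    rwa [ENNReal.toReal_mul, ENNReal.toReal_ofReal (by positivity)] at this
  have hinv_le : ∀ x ∈ Icc a b, |(h' x)⁻¹| ≤ θ⁻¹ := fun x hx => by
    rw [abs_inv]; exact inv_anti₀ hθ (hlow x hx)
  have hibp := norm_integral_smul_le hab hG hG' (fun x _ => (hG1 x).le) hinvBV
    hi.1.aestronglyMeasurable.aemeasurable.inv.aestronglyMeasurable
  have hid : ∫ x in a..b, (h' x)⁻¹ • G' x = 2 * Real.pi * Complex.I * ∫ x in a..b, G x := by
    rw [← intervalIntegral.integral_const_mul]
    refine intervalIntegral.integral_congr fun x hx => ?_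
    rw [uIcc_of_le hab] at hx
    have hne : (h' x : ℂ) ≠ 0 := Complex.ofReal_ne_zero.2 fun h0 => by
      have := hlow x hx
      rw [h0, abs_zero] at this
      linarith
    simp only [G', Complex.real_smul, Complex.ofReal_inv]
    field_simp
  have hnorm : ‖2 * Real.pi * Complex.I‖ = 2 * Real.pi := by
    simp [abs_of_pos Real.pi_pos]
  rw [hid, norm_mul, hnorm] at hibp
  calc _ ≤ (2 * θ⁻¹ + (θ ^ 2)⁻¹ * V) / (2 * Real.pi) := by
        rw [le_div_iff₀ (by positivity), mul_comm]
        linarith [hinv_le a ⟨le_rfl, hab⟩, hinv_le b ⟨hab, le_rfl⟩]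
    _ = _ := by field_simp

lemma norm_integral_cexp_le_Ioo {h h' : ℝ → ℝ} {α β θ : ℝ} (hαβ : α < β)
    (hd : ∀ x ∈ Ioo α β, HasDerivAt h (h' x) x) (hi : IntervalIntegrable h' volume α β)
    (hBV : BoundedVariationOn h' (Ioo α β)) (hθ : 0 < θ) (hlow : ∀ x ∈ Ioo α β, θ ≤ |h' x|) :
    ‖∫ x in α..β, Complex.exp (2 * Real.pi * Complex.I * h x)‖ ≤
      1 / (Real.pi * θ) + (eVariationOn h' (Ioo α β)).toReal / (2 * Real.pi * θ ^ 2) := by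
  refine norm_integral_le_of_forall_Icc_subset_Ioo hαβ
    (intervalIntegrable_cexp_two_pi_I_mul hαβ.le hd) (fun x => (norm_cexp_two_pi_I_mul (h x)).le)
    fun u v hu huv hv => ?_
  have hsub : Icc u v ⊆ Ioo α β := Icc_subset_Ioo hu hv
  have huIcc : uIcc u v ⊆ uIcc α β := by
    rw [uIcc_of_le huv, uIcc_of_le hαβ.le]
    exact hsub.trans Ioo_subset_Icc_self
  refine (norm_integral_cexp_le_Icc huv (fun x hx => hd x (hsub hx)) (hi.mono_set huIcc)
    (hBV.mono hsub) hθ fun x hx => hlow x (hsub hx)).trans ?_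
  gcongr
  exact eVariationOn.mono h' hsub

theorem stmt7_general (h : ℝ → ℝ) (hper : Function.Periodic h 1)
    (N : ℕ) (a : ℕ → ℝ)
    (ha0 : 0 ≤ a 0) (ha1 : ∀ j, j < N → a j < 1)
    (hamono : ∀ j, j + 1 < N → a j < a (j + 1)) (haN : a N = a 0 + 1)
    (h' : ℝ → ℝ)
    (hderiv : ∀ j < N, ∀ x ∈ Set.Ioo (a j) (a (j + 1)), HasDerivAt h (h' x) x)
    (hAC : ∀ j < N, IntervalIntegrable h' volume (a j) (a (j + 1)) ∧
      ∃ c : ℝ, ∀ x ∈ Set.Ioo (a j) (a (j + 1)), h x = c + ∫ t in (a j)..x, h' t)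
    (hBV : ∀ j < N, BoundedVariationOn h' (Set.Ioo (a j) (a (j + 1))))
    (θ : ℝ) (hθ : 0 < θ)
    (hlow : ∀ j < N, ∀ x ∈ Set.Ioo (a j) (a (j + 1)), θ ≤ |h' x|) :
    ‖∫ x in (0:ℝ)..1, Complex.exp (2 * Real.pi * Complex.I * h x)‖ ≤
      (N : ℝ) / (Real.pi * θ) +
        (∑ j ∈ Finset.range N, (eVariationOn h' (Set.Ioo (a j) (a (j + 1)))).toReal) /
          (2 * Real.pi * θ ^ 2) := by
  set F : ℝ → ℂ := fun x => Complex.exp (2 * Real.pi * Complex.I * h x)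
  have hlt : ∀ j < N, a j < a (j + 1) := fun j hj => by
    rcases Nat.lt_or_ge (j + 1) N with hj' | hj'
    · exact hamono j hj'
    · rw [show j + 1 = N by omega, haN]
      linarith [ha1 j hj]
  have hshift : ∫ x in (0 : ℝ)..1, F x = ∫ x in a 0..a N, F x := by
    have hFper : Function.Periodic F 1 := fun x => by simp only [F, hper x]
    rw [haN, ← hFper.intervalIntegral_add_eq 0 (a 0), zero_add]
  rw [hshift, ← intervalIntegral.sum_integral_adjacent_intervals fun j hj =>
    intervalIntegrable_cexp_two_pi_I_mul (hlt j hj).le (hderiv j hj)]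
  calc _ ≤ ∑ j ∈ range N, ‖∫ x in a j..a (j + 1), F x‖ := norm_sum_le _ _
    _ ≤ ∑ j ∈ range N, (1 / (Real.pi * θ) +
          (eVariationOn h' (Ioo (a j) (a (j + 1)))).toReal / (2 * Real.pi * θ ^ 2)) :=
        sum_le_sum fun j hj => norm_integral_cexp_le_Ioo (hlt j (mem_range.1 hj))
          (hderiv j (mem_range.1 hj)) (hAC j (mem_range.1 hj)).1 (hBV j (mem_range.1 hj)) hθ
          (hlow j (mem_range.1 hj))
    _ = _ := by
        rw [sum_add_distrib, sum_const, card_range, nsmul_eq_mul, ← sum_div]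
        ring

/-- **Lemma 3.1.** Let `h : 𝕋 → ℝ` (realized as a `1`-periodic function on `ℝ`) be
piecewise absolutely continuous with `N` pieces determined by the points
`0 ≤ a 0 < a 1 < ⋯ < a (N-1) < 1` (cyclically completed by `a N = a 0 + 1`), with
derivative `h'` of bounded variation satisfying `|h'(x)| ≥ θ > 0` off the discontinuity
set.  Then `|∫_𝕋 e^{2πih}| ≤ N/(πθ) + Var h'/(2πθ²)`. -/
theorem stmt7 (h : ℝ → ℝ) (hper : Function.Periodic h 1)
    (N : ℕ) (hN : 0 < N) (a : ℕ → ℝ)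
    (ha0 : 0 ≤ a 0) (ha1 : ∀ j, j < N → a j < 1)
    (hamono : ∀ j, j + 1 < N → a j < a (j + 1)) (haN : a N = a 0 + 1)
    (h' : ℝ → ℝ)
    (hderiv : ∀ j < N, ∀ x ∈ Set.Ioo (a j) (a (j + 1)), HasDerivAt h (h' x) x)
    (hAC : ∀ j < N, IntervalIntegrable h' volume (a j) (a (j + 1)) ∧
      ∃ c : ℝ, ∀ x ∈ Set.Ioo (a j) (a (j + 1)), h x = c + ∫ t in (a j)..x, h' t)
    (hBV : ∀ j < N, BoundedVariationOn h' (Set.Ioo (a j) (a (j + 1))))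
    (θ : ℝ) (hθ : 0 < θ)
    (hlow : ∀ j < N, ∀ x ∈ Set.Ioo (a j) (a (j + 1)), θ ≤ |h' x|) :
    ‖∫ x in (0:ℝ)..1, Complex.exp (2 * Real.pi * Complex.I * h x)‖ ≤
      (N : ℝ) / (Real.pi * θ) +
        (∑ j ∈ Finset.range N, (eVariationOn h' (Set.Ioo (a j) (a (j + 1)))).toReal) /
          (2 * Real.pi * θ ^ 2) :=
  stmt7_general h hper N a ha0 ha1 hamono haN h' hderiv hAC hBV θ hθ hlow
end

section
/- Let (f_n)_{n∈ℕ} be a sequence of piecewise C¹-functions f_n : 𝕋 → ℝ₊ for which there exist constants 0 < c < C, 0 < θ < Θ, n₀ ∈ ℕ, N ∈ ℕ and finite sets D(f_n) ⊂ 𝕋 containing all discontinuity points of f_n such that: (8) f_{n−1}(x) + c ≤ f_n(x) ≤ f_{n−1}(x) + C for all n ∈ ℕ and x ∈ 𝕋 (with f₀ ≡ 0); (9) D(f_n) ⊂ D(f_{n+1}) and #D(f_n) ≤ N·n; (10) θ·n ≤ |f_n'(x)| ≤ Θ·n for all n ≥ n₀ and x ∈ 𝕋 ∖ D(f_n). Then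 for every t ≥ 2C·n₀ and every 0 < ε < c/4, λ_𝕋({x ∈ 𝕋 : ∃ j ∈ ℕ, |f_j(x) − t| < ε}) < (16C/(θc²))·(Nc + Θ)·ε. (Lemma 4.2.) -/
/-!
Let `j₂ = ⌊(t + ε) / c⌋` and `j₁ = ⌊(t - ε) / C⌋ + 1`: since `c j ≤ f_j ≤ C j`, only the levels
`j₁ ≤ j ≤ j₂` can come `ε`-close to `t`, and all of them satisfy `j ≥ n₀`. Cut `[0, 1)` at `0` and
at the at most `N j₂` points of `D j₂ ⊇ D j`. On each arc `I` every such `f_j` is `C¹` with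
`θ j₁ ≤ |f_j'| ≤ Θ j₂`, so by the mean value theorem `{x ∈ I | |f_j x - t| < ε}` has length at most
`2ε / (θ j₁)`, while `f_b - f_a ≥ c (b - a)` and the oscillation `≤ Θ j₂ |I|` of `f_b` on `I` allow
at most `1 + (2ε + Θ j₂ |I|) / c` levels to be hit on `I`. Summing over the arcs gives the bound;
`D j₂` is nonempty because a periodic `C¹` function has a critical point (Rolle).
-/

open MeasureTheory Set Finset

theorem add_mul_le_of_add_le_succ {u : ℕ → ℝ} {c : ℝ} (h : ∀ n, u n + c ≤ u (n + 1))
    (a k : ℕ) : u a + c * k ≤ u (a + k) := by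
  induction k with
  | zero => simp
  | succ k ih => rw [← add_assoc]; push_cast; linarith [h (a + k)]

theorem le_add_mul_of_le_add_succ {u : ℕ → ℝ} {C : ℝ} (h : ∀ n, u (n + 1) ≤ u n + C)
    (a k : ℕ) : u (a + k) ≤ u a + C * k := by
  induction k with
  | zero => simp
  | succ k ih => rw [← add_assoc]; push_cast; linarith [h (a + k)]

theorem card_mul_le_add_of_forall_mul_sub_le {T : Finset ℕ} (hT : T.Nonempty) {c M : ℝ}
    (hc : 0 ≤ c) (h : ∀ a ∈ T, ∀ b ∈ T, a ≤ b → c * ((b : ℝ) - a) ≤ M) : #T * c ≤ M + c := by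
  have hab := T.min'_le _ (T.max'_mem hT)
  have hcard : (#T : ℝ) ≤ T.max' hT - T.min' hT + 1 := by
    have : #T ≤ T.max' hT + 1 - T.min' hT := by
      simpa using card_le_card fun j hj => mem_Icc.mpr ⟨T.min'_le j hj, T.le_max' j hj⟩
    rw [← Nat.cast_sub hab]
    exact_mod_cast this.trans (by omega)
  nlinarith [h _ (T.min'_mem hT) _ (T.max'_mem hT) hab]

section MeanValue

variable {g : ℝ → ℝ} {u v m : ℝ}

theorem mul_abs_sub_le_abs_sub_of_le_abs_deriv (hg : DifferentiableOn ℝ g (Ioo u v))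
    (hder : ∀ x ∈ Ioo u v, m ≤ |deriv g x|) {x y : ℝ} (hx : x ∈ Ioo u v) (hy : y ∈ Ioo u v) :
    m * |y - x| ≤ |g y - g x| := by
  wlog hxy : x < y generalizing x y
  · rcases (not_lt.mp hxy).eq_or_lt with rfl | hyx
    · simp
    · simpa only [abs_sub_comm] using this hy hx hyx
  have hsub : Icc x y ⊆ Ioo u v := Icc_subset_Ioo hx.1 hy.2
  obtain ⟨z, hz, hslope⟩ := exists_deriv_eq_slope g hxy (hg.continuousOn.mono hsub)
    (hg.mono (Ioo_subset_Icc_self.trans hsub))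
  have hpos : 0 < y - x := sub_pos.mpr hxy
  calc m * |y - x| = m * (y - x) := by rw [abs_of_pos hpos]
    _ ≤ |deriv g z| * (y - x) :=
      mul_le_mul_of_nonneg_right (hder z (hsub (Ioo_subset_Icc_self hz))) hpos.le
    _ = |g y - g x| := by rw [hslope, abs_div, abs_of_pos hpos, div_mul_cancel₀ _ hpos.ne']

theorem volume_abs_sub_lt_le_of_le_abs_deriv (hg : DifferentiableOn ℝ g (Ioo u v)) (hm : 0 < m)
    (hder : ∀ x ∈ Ioo u v, m ≤ |deriv g x|) (t ε : ℝ) :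
    volume {x ∈ Ioo u v | |g x - t| < ε} ≤ ENNReal.ofReal (2 * ε / m) := by
  refine (Real.volume_le_diam _).trans (Metric.ediam_le fun x ⟨hx, hxt⟩ y ⟨hy, hyt⟩ => ?_)
  rw [edist_dist, Real.dist_eq]
  refine ENNReal.ofReal_le_ofReal ((le_div_iff₀' hm).mpr ?_)
  calc m * |x - y| ≤ |g x - g y| := mul_abs_sub_le_abs_sub_of_le_abs_deriv hg hder hy hx
    _ ≤ |g x - t| + |g y - t| := by rw [abs_sub_comm (g y)]; exact abs_sub_le _ _ _
    _ ≤ 2 * ε := by linarith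

end MeanValue

-- Continuity suffices: `deriv f x = 0` wherever `f` is not differentiable.
theorem Function.Periodic.exists_deriv_eq_zero {f : ℝ → ℝ} {p : ℝ} (hf : f.Periodic p)
    (hp : 0 < p) (hc : Continuous f) : ∃ x, deriv f x = 0 := by
  obtain ⟨x, -, hx⟩ := _root_.exists_deriv_eq_zero hp hc.continuousOn (by simpa using (hf 0).symm)
  exact ⟨x, hx⟩

theorem nonempty_of_periodic_of_abs_deriv_pos {f : ℝ → ℝ} {E : Set ℝ} (hper : f.Periodic 1)
    (hpw : ∀ u v : ℝ, u < v → Ioo u v ∩ {x | Int.fract x ∈ E} = ∅ →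
      ∃ g : ℝ → ℝ, ContDiff ℝ 1 g ∧ EqOn f g (Ioo u v))
    (hder : ∀ x, Int.fract x ∉ E → 0 < |deriv f x|) : E.Nonempty := by
  by_contra hE
  rw [Set.not_nonempty_iff_eq_empty] at hE
  subst hE
  have hcont : Continuous f := continuous_iff_continuousAt.mpr fun x => by
    obtain ⟨g, hg, hfg⟩ := hpw (x - 1) (x + 1) (by linarith) (by simp)
    exact hg.continuous.continuousAt.congr
      (Filter.eventuallyEq_of_mem (Ioo_mem_nhds (by linarith) (by linarith)) hfg.symm)
  obtain ⟨z, hz⟩ := hper.exists_deriv_eq_zero one_pos hcont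
  simpa [hz] using hder z (notMem_empty _)

namespace Finset

variable {α : Type*} [LinearOrder α] (P : Finset α) {a b d x : α}

def nextPoint (b d : α) : α :=
  (insert b (P.filter (d < ·))).min' (insert_nonempty _ _)

theorem lt_nextPoint (h : d < b) : d < P.nextPoint b d := by
  refine (lt_min'_iff _ _).mpr fun y hy => ?_
  rcases mem_insert.mp hy with rfl | hy
  exacts [h, (mem_filter.mp hy).2]

theorem nextPoint_le_right : P.nextPoint b d ≤ b :=
  min'_le _ _ (mem_insert_self _ _)

theorem nextPoint_le_of_mem {p : α} (hp : p ∈ P) (h : d < p) : P.nextPoint b d ≤ p :=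
  min'_le _ _ (mem_insert_of_mem (mem_filter.mpr ⟨hp, h⟩))

theorem notMem_Ioo_nextPoint {p : α} (hp : p ∈ P) : p ∉ Set.Ioo d (P.nextPoint b d) :=
  fun h => (P.nextPoint_le_of_mem hp h.1).not_gt h.2

theorem pairwiseDisjoint_Ioo_nextPoint :
    (P : Set α).PairwiseDisjoint fun d => Set.Ioo d (P.nextPoint b d) := by
  intro d hd e he hde
  wlog hlt : d < e generalizing d e
  · exact (this he hd hde.symm ((Ne.symm hde).lt_of_le (not_lt.mp hlt))).symm
  exact Set.disjoint_left.mpr fun x hxd hxe =>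
    (P.nextPoint_le_of_mem he hlt).not_gt (hxe.1.trans hxd.2)

theorem exists_mem_Ioo_nextPoint (ha : a ∈ P) (hx : x ∈ Set.Ico a b) (hxP : x ∉ P) :
    ∃ d ∈ P, x ∈ Set.Ioo d (P.nextPoint b d) := by
  have hne : (P.filter (· < x)).Nonempty :=
    ⟨a, mem_filter.mpr ⟨ha, hx.1.lt_of_ne (fun h => hxP (h ▸ ha))⟩⟩
  obtain ⟨hdP, hdx⟩ := mem_filter.mp ((P.filter (· < x)).max'_mem hne)
  refine ⟨_, hdP, hdx, (lt_min'_iff _ _).mpr fun y hy => ?_⟩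
  rcases mem_insert.mp hy with rfl | hy
  · exact hx.2
  obtain ⟨hyP, hdy⟩ := mem_filter.mp hy
  refine lt_of_not_ge fun hyx => ?_
  have hyx : y < x := hyx.lt_of_ne fun h => hxP (h ▸ hyP)
  exact hdy.not_ge ((P.filter (· < x)).le_max' y (mem_filter.mpr ⟨hyP, hyx⟩))

section Real

variable (P : Finset ℝ) {a b : ℝ}

theorem volume_le_sum_nextPoint (p : ℝ → Prop) (ha : a ∈ P) :
    volume {x ∈ Set.Ico a b | p x} ≤ ∑ d ∈ P, volume {x ∈ Set.Ioo d (P.nextPoint b d) | p x} :=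
  calc volume {x ∈ Set.Ico a b | p x}
      ≤ volume ((P : Set ℝ) ∪ ⋃ d ∈ P, {x ∈ Set.Ioo d (P.nextPoint b d) | p x}) := by
        refine measure_mono fun x ⟨hx, hpx⟩ => ?_
        by_cases hxP : x ∈ P
        · exact Or.inl hxP
        obtain ⟨d, hd, hxd⟩ := P.exists_mem_Ioo_nextPoint ha hx hxP
        exact Or.inr (Set.mem_biUnion hd ⟨hxd, hpx⟩)
    _ ≤ volume (P : Set ℝ) + volume (⋃ d ∈ P, {x ∈ Set.Ioo d (P.nextPoint b d) | p x}) :=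
        measure_union_le _ _
    _ ≤ ∑ d ∈ P, volume {x ∈ Set.Ioo d (P.nextPoint b d) | p x} := by
        rw [P.finite_toSet.measure_zero, zero_add]
        exact measure_biUnion_finset_le _ _

theorem sum_nextPoint_sub_le (hab : a ≤ b) (hP : (P : Set ℝ) ⊆ Set.Ico a b) :
    ∑ d ∈ P, (P.nextPoint b d - d) ≤ b - a := by
  have hlen : ∀ d ∈ P, 0 ≤ P.nextPoint b d - d := fun d hd =>
    sub_nonneg.mpr (P.lt_nextPoint (hP hd).2).le
  rw [← ENNReal.ofReal_le_ofReal_iff (sub_nonneg.mpr hab), ENNReal.ofReal_sum_of_nonneg hlen]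
  calc ∑ d ∈ P, ENNReal.ofReal (P.nextPoint b d - d)
      = volume (⋃ d ∈ P, Set.Ioo d (P.nextPoint b d)) := by
        rw [measure_biUnion_finset P.pairwiseDisjoint_Ioo_nextPoint fun _ _ => measurableSet_Ioo]
        simp only [Real.volume_Ioo]
    _ ≤ volume (Set.Icc a b) := measure_mono (Set.iUnion₂_subset fun d hd =>
        Set.Ioo_subset_Icc_self.trans (Set.Icc_subset_Icc (hP hd).1 P.nextPoint_le_right))
    _ = ENNReal.ofReal (b - a) := Real.volume_Icc

end Real

end Finset

theorem volume_exists_abs_sub_lt_le (f : ℕ → ℝ → ℝ) (J : Finset ℕ) {u v c m L t ε : ℝ}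
    (hc : 0 < c) (hm : 0 < m) (hgrow : ∀ x a k, f a x + c * k ≤ f (a + k) x)
    (hdiff : ∀ j ∈ J, DifferentiableOn ℝ (f j) (Ioo u v))
    (hlow : ∀ j ∈ J, ∀ x ∈ Ioo u v, m ≤ |deriv (f j) x|)
    (hup : ∀ j ∈ J, ∀ x ∈ Ioo u v, |deriv (f j) x| ≤ L) :
    volume {x ∈ Ioo u v | ∃ j ∈ J, |f j x - t| < ε} ≤
      ENNReal.ofReal ((2 * ε + L * (v - u) + c) / c * (2 * ε / m)) := by
  classical
  set T := J.filter fun j => ∃ x ∈ Ioo u v, |f j x - t| < ε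
  have hvol : volume {x ∈ Ioo u v | ∃ j ∈ J, |f j x - t| < ε} ≤ #T * ENNReal.ofReal (2 * ε / m) :=
    calc _ ≤ volume (⋃ j ∈ T, {x ∈ Ioo u v | |f j x - t| < ε}) := by
          refine measure_mono fun x ⟨hx, j, hj, hjx⟩ => ?_
          exact mem_biUnion (mem_filter.mpr ⟨hj, x, hx, hjx⟩) ⟨hx, hjx⟩
      _ ≤ ∑ j ∈ T, volume {x ∈ Ioo u v | |f j x - t| < ε} := measure_biUnion_finset_le _ _
      _ ≤ ∑ _j ∈ T, ENNReal.ofReal (2 * ε / m) := sum_le_sum fun j hj =>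
          have hjJ := (mem_filter.mp hj).1
          volume_abs_sub_lt_le_of_le_abs_deriv (hdiff j hjJ) hm (hlow j hjJ) t ε
      _ = _ := by rw [sum_const, nsmul_eq_mul]
  obtain hT | ⟨j₀, hj₀⟩ := T.eq_empty_or_nonempty
  · exact hvol.trans (by simp [hT])
  obtain ⟨hj₀J, x₀, hx₀, hj₀x₀⟩ := mem_filter.mp hj₀
  have hε : 0 ≤ ε := (abs_nonneg _).trans hj₀x₀.le
  have hL : 0 ≤ L := (abs_nonneg _).trans (hup j₀ hj₀J x₀ hx₀)
  have hcard : #T * c ≤ 2 * ε + L * (v - u) + c := by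
    refine card_mul_le_add_of_forall_mul_sub_le ⟨j₀, hj₀⟩ hc.le fun a ha b hb hab => ?_
    obtain ⟨-, x, hx, hax⟩ := mem_filter.mp ha
    obtain ⟨hbJ, y, hy, hby⟩ := mem_filter.mp hb
    obtain ⟨k, rfl⟩ := Nat.exists_eq_add_of_le hab
    have hlip : |f (a + k) x - f (a + k) y| ≤ L * |x - y| := by
      simpa only [Real.norm_eq_abs] using (convex_Ioo u v).norm_image_sub_le_of_norm_deriv_le
        (fun z hz => (hdiff _ hbJ).differentiableAt (isOpen_Ioo.mem_nhds hz))
        (fun z hz => hup _ hbJ z hz) hy hx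
    have hxy : |x - y| ≤ v - u :=
      abs_sub_le_iff.mpr ⟨by linarith [hx.2, hy.1], by linarith [hx.1, hy.2]⟩
    push_cast
    linarith [hgrow x a k, abs_lt.mp hax, abs_lt.mp hby, abs_le.mp hlip,
      mul_le_mul_of_nonneg_left hxy hL]
  refine hvol.trans ?_
  rw [← ENNReal.ofReal_natCast, ← ENNReal.ofReal_mul (Nat.cast_nonneg _)]
  exact ENNReal.ofReal_le_ofReal
    (mul_le_mul_of_nonneg_right ((le_div_iff₀ hc).mpr hcard) (by positivity))

theorem volume_exists_abs_sub_lt_le_of_piecewise (f : ℕ → ℝ → ℝ) (J : Finset ℕ) {E : Set ℝ}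
    {c m L t ε : ℝ} (hc : 0 < c) (hm : 0 < m) (hL : 0 ≤ L) (hε : 0 ≤ ε)
    (hE : E.Finite) (hE01 : E ⊆ Ico 0 1) (hgrow : ∀ x a k, f a x + c * k ≤ f (a + k) x)
    (hpw : ∀ j ∈ J, ∀ u v : ℝ, u < v → Ioo u v ∩ {x | Int.fract x ∈ E} = ∅ →
      ∃ g : ℝ → ℝ, ContDiff ℝ 1 g ∧ EqOn (f j) g (Ioo u v))
    (hder : ∀ j ∈ J, ∀ x, Int.fract x ∉ E → m ≤ |deriv (f j) x| ∧ |deriv (f j) x| ≤ L) :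
    volume {x ∈ Ico (0 : ℝ) 1 | ∃ j ∈ J, |f j x - t| < ε} ≤
      ENNReal.ofReal (((E.ncard + 1) * (2 * ε + c) + L) / c * (2 * ε / m)) := by
  classical
  set P := insert 0 hE.toFinset
  have hP : (P : Set ℝ) ⊆ Ico 0 1 := by
    rw [coe_insert, hE.coe_toFinset]
    exact insert_subset ⟨le_rfl, one_pos⟩ hE01
  have hcard : (#P : ℝ) ≤ E.ncard + 1 := by
    rw [ncard_eq_toFinset_card _ hE]; exact_mod_cast card_insert_le _ _
  have hgapE : ∀ d ∈ P, ∀ x ∈ Ioo d (P.nextPoint 1 d), Int.fract x ∉ E := by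
    intro d hd x hx hxE
    have hfract : Int.fract x = x :=
      Int.fract_eq_self.mpr ⟨(hP hd).1.trans hx.1.le, hx.2.trans_le P.nextPoint_le_right⟩
    exact P.notMem_Ioo_nextPoint (mem_insert_of_mem (hE.mem_toFinset.mpr (hfract ▸ hxE))) hx
  have hgap : ∀ d ∈ P, ∀ j ∈ J, DifferentiableOn ℝ (f j) (Ioo d (P.nextPoint 1 d)) := by
    intro d hd j hj
    obtain ⟨g, hg, hfg⟩ := hpw j hj _ _ (P.lt_nextPoint (hP hd).2)
      (eq_empty_iff_forall_notMem.mpr fun x ⟨hx, hxE⟩ => hgapE d hd x hx hxE)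
    exact (hg.differentiable one_ne_zero).differentiableOn.congr hfg
  calc volume {x ∈ Ico (0:ℝ) 1 | ∃ j ∈ J, |f j x - t| < ε}
      ≤ ∑ d ∈ P, volume {x ∈ Ioo d (P.nextPoint 1 d) | ∃ j ∈ J, |f j x - t| < ε} :=
        P.volume_le_sum_nextPoint _ (mem_insert_self 0 _)
    _ ≤ ∑ d ∈ P, ENNReal.ofReal ((2 * ε + L * (P.nextPoint 1 d - d) + c) / c * (2 * ε / m)) :=
        sum_le_sum fun d hd => volume_exists_abs_sub_lt_le f J hc hm hgrow (hgap d hd)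
          (fun j hj x hx => (hder j hj x (hgapE d hd x hx)).1)
          (fun j hj x hx => (hder j hj x (hgapE d hd x hx)).2)
    _ = ENNReal.ofReal
          ((#P * (2 * ε + c) + L * ∑ d ∈ P, (P.nextPoint 1 d - d)) / c * (2 * ε / m)) := by
        rw [← ENNReal.ofReal_sum_of_nonneg fun d hd => ?_]
        · rw [← sum_mul, ← sum_div, sum_add_distrib, sum_add_distrib, mul_sum, sum_const,
            sum_const, nsmul_eq_mul, nsmul_eq_mul]
          congr 1
          ring
        · have : 0 ≤ L * (P.nextPoint 1 d - d) :=
            mul_nonneg hL (sub_nonneg.mpr (P.lt_nextPoint (hP hd).2).le)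
          positivity
    _ ≤ _ := by
        have hlen := mul_le_mul_of_nonneg_left (P.sum_nextPoint_sub_le zero_le_one hP) hL
        gcongr
        linarith

theorem volume_exists_abs_sub_lt_le_of_levels (f : ℕ → ℝ → ℝ) {c θ Θ : ℝ} {n₀ : ℕ}
    {D : ℕ → Set ℝ} (hc : 0 < c) (hθ : 0 < θ) (hΘ : 0 ≤ Θ)
    (hDfin : ∀ n, 1 ≤ n → (D n).Finite) (hDsub : ∀ n, 1 ≤ n → D n ⊆ Ico 0 1)
    (hDmono : ∀ n, 1 ≤ n → D n ⊆ D (n + 1)) (hgrow : ∀ x a k, f a x + c * k ≤ f (a + k) x)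
    (hpw : ∀ n : ℕ, 1 ≤ n → ∀ u v : ℝ, u < v → Ioo u v ∩ {x : ℝ | Int.fract x ∈ D n} = ∅ →
      ∃ g : ℝ → ℝ, ContDiff ℝ 1 g ∧ EqOn (f n) g (Ioo u v))
    (h10 : ∀ n : ℕ, 1 ≤ n → n₀ ≤ n → ∀ x : ℝ, Int.fract x ∉ D n →
      θ * n ≤ |deriv (f n) x| ∧ |deriv (f n) x| ≤ Θ * n)
    {j₁ j₂ : ℕ} (hj₁ : 1 ≤ j₁) (hn₀ : n₀ ≤ j₁) (hj₁₂ : j₁ ≤ j₂) {t ε : ℝ} (hε : 0 ≤ ε) :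
    volume {x ∈ Ico (0 : ℝ) 1 | ∃ j ∈ Finset.Icc j₁ j₂, |f j x - t| < ε} ≤
      ENNReal.ofReal ((((D j₂).ncard + 1) * (2 * ε + c) + Θ * j₂) / c * (2 * ε / (θ * j₁))) := by
  have hmono := monotoneOn_nat_Ici_of_le_succ (k := 1) hDmono
  have hJ : ∀ j ∈ Finset.Icc j₁ j₂, 1 ≤ j ∧ n₀ ≤ j ∧ D j ⊆ D j₂ := fun j hj => by
    obtain ⟨h1, h2⟩ := Finset.mem_Icc.mp hj
    exact ⟨by omega, by omega, hmono (show 1 ≤ j by omega) (show 1 ≤ j₂ by omega) h2⟩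
  refine volume_exists_abs_sub_lt_le_of_piecewise f _ hc (by positivity) (by positivity) hε
    (hDfin j₂ (by omega)) (hDsub j₂ (by omega)) hgrow
    (fun j hj u v huv hE => hpw j (hJ j hj).1 u v huv (subset_empty_iff.mp
      (hE ▸ inter_subset_inter_right _ fun x hx => (hJ j hj).2.2 hx))) fun j hj x hx => ?_
  obtain ⟨h1, h2⟩ := Finset.mem_Icc.mp hj
  obtain ⟨hlo, hhi⟩ := h10 j (hJ j hj).1 (hJ j hj).2.1 x fun h => hx ((hJ j hj).2.2 h)
  exact ⟨le_trans (by gcongr) hlo, hhi.trans (by gcongr)⟩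

theorem add_mul_le_of_step {f : ℕ → ℝ → ℝ} {c C : ℝ}
    (h8 : ∀ n : ℕ, 1 ≤ n → ∀ x : ℝ, f (n - 1) x + c ≤ f n x ∧ f n x ≤ f (n - 1) x + C)
    (x : ℝ) (a k : ℕ) : f a x + c * k ≤ f (a + k) x :=
  add_mul_le_of_add_le_succ (fun n => by simpa using (h8 (n + 1) n.succ_pos x).1) a k

theorem mul_le_and_le_mul_of_step {f : ℕ → ℝ → ℝ} {c C : ℝ} (hf0 : ∀ x, f 0 x = 0)
    (h8 : ∀ n : ℕ, 1 ≤ n → ∀ x : ℝ, f (n - 1) x + c ≤ f n x ∧ f n x ≤ f (n - 1) x + C)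
    (j : ℕ) (x : ℝ) : c * j ≤ f j x ∧ f j x ≤ C * j := by
  have hup := le_add_mul_of_le_add_succ (u := (f · x))
    (fun n => by simpa using (h8 (n + 1) n.succ_pos x).2) 0 j
  have hlo := add_mul_le_of_step h8 x 0 j
  simp only [hf0, zero_add] at hup hlo
  exact ⟨hlo, hup⟩

theorem mem_Icc_floor_of_abs_sub_lt {j : ℕ} (hj : j ≠ 0) {y t ε c C : ℝ} (hc : 0 < c)
    (hC : 0 < C) (hcy : c * j ≤ y) (hyC : y ≤ C * j) (hyt : |y - t| < ε) :
    j ∈ Finset.Icc (⌊(t - ε) / C⌋₊ + 1) ⌊(t + ε) / c⌋₊ := by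
  obtain ⟨hlo, hhi⟩ := abs_lt.mp hyt
  refine mem_Icc.mpr ⟨Nat.succ_le_of_lt ((Nat.floor_lt' hj).mpr ?_), Nat.le_floor ?_⟩
  · rw [div_lt_iff₀ hC]; linarith
  · rw [le_div_iff₀ hc]; linarith

theorem lt_mul_floor_div_add_one {C : ℝ} (hC : 0 < C) (a : ℝ) :
    a < C * (⌊a / C⌋₊ + 1 : ℕ) := by
  have := Nat.lt_floor_add_one (a / C)
  rw [div_lt_iff₀ hC] at this
  push_cast
  linarith

theorem floor_div_mul_le {c a : ℝ} (hc : 0 < c) (ha : 0 ≤ a) : (⌊a / c⌋₊ : ℝ) * c ≤ a :=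
  (le_div_iff₀ hc).mp (Nat.floor_le (div_nonneg ha hc.le))

theorem levels_estimate_lt {c C θ Θ t ε : ℝ} {e N j₁ j₂ : ℕ} (hc : 0 < c) (hC : 0 < C) (hθ : 0 < θ)
    (hΘ : 0 < Θ) (hε : 0 < ε) (hεc : ε < c / 4) (ht : 3 * ε < t) (he : 1 ≤ e)
    (heN : e ≤ N * j₂) (hj₂ : j₂ * c ≤ t + ε) (hj₁ : t - ε < C * j₁) :
    ((e + 1) * (2 * ε + c) + Θ * j₂) / c * (2 * ε / (θ * j₁)) <
      16 * C / (θ * c ^ 2) * (N * c + Θ) * ε := by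
  have hCj : 0 < C * j₁ := by linarith
  have hj₁pos : (0 : ℝ) < j₁ := pos_of_mul_pos_right hCj hC.le
  have he2 : (e : ℝ) + 1 ≤ 2 * (N * j₂) := by
    have : e + 1 ≤ 2 * (N * j₂) := by omega
    exact_mod_cast this
  have hk : 0 < 2 * ε / (θ * c ^ 2 * j₁) := by positivity
  have key : ((e + 1) * (2 * ε + c) + Θ * j₂) * c < 8 * (C * j₁) * (N * c + Θ) :=
    calc ((e + 1) * (2 * ε + c) + Θ * j₂) * c ≤ (3 * N * c + Θ) * (j₂ * c) := by
          nlinarith [mul_le_mul he2 (by linarith : 2 * ε + c ≤ 3 / 2 * c) (by positivity)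
            (by positivity : (0 : ℝ) ≤ 2 * (N * j₂))]
      _ < (3 * N * c + Θ) * (2 * (C * j₁)) :=
          mul_lt_mul_of_pos_left (by linarith) (by positivity)
      _ ≤ 8 * (C * j₁) * (N * c + Θ) := by
          nlinarith [mul_pos hCj hΘ, mul_nonneg hCj.le (by positivity : (0 : ℝ) ≤ N * c)]
  calc ((e + 1) * (2 * ε + c) + Θ * j₂) / c * (2 * ε / (θ * j₁))
      = ((e + 1) * (2 * ε + c) + Θ * j₂) * c * (2 * ε / (θ * c ^ 2 * j₁)) := by
        field_simp
    _ < 8 * (C * j₁) * (N * c + Θ) * (2 * ε / (θ * c ^ 2 * j₁)) :=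
        mul_lt_mul_of_pos_right key hk
    _ = 16 * C / (θ * c ^ 2) * (N * c + Θ) * ε := by
        field_simp; ring

theorem stmt8_general (f : ℕ → ℝ → ℝ) (hper : ∀ n, Function.Periodic (f n) 1)
    (hf0 : ∀ x, f 0 x = 0)
    (c C θ Θ : ℝ) (hc : 0 < c) (hcC : c < C) (hθ : 0 < θ) (hθΘ : θ < Θ)
    (n₀ N : ℕ)
    (D : ℕ → Set ℝ)
    (hDfin : ∀ n, 1 ≤ n → (D n).Finite)
    (hDsub : ∀ n, 1 ≤ n → D n ⊆ Set.Ico 0 1)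
    (h8 : ∀ n : ℕ, 1 ≤ n → ∀ x : ℝ, f (n - 1) x + c ≤ f n x ∧ f n x ≤ f (n - 1) x + C)
    (h9 : ∀ n : ℕ, 1 ≤ n → D n ⊆ D (n + 1) ∧ (D n).ncard ≤ N * n)
    (hpw : ∀ n : ℕ, 1 ≤ n → ∀ u v : ℝ, u < v →
      Set.Ioo u v ∩ {x : ℝ | Int.fract x ∈ D n} = ∅ →
      ∃ g : ℝ → ℝ, ContDiff ℝ 1 g ∧ Set.EqOn (f n) g (Set.Ioo u v))
    (h10 : ∀ n : ℕ, 1 ≤ n → n₀ ≤ n → ∀ x : ℝ, Int.fract x ∉ D n →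
      θ * n ≤ |deriv (f n) x| ∧ |deriv (f n) x| ≤ Θ * n) :
    ∀ t : ℝ, 2 * C * n₀ ≤ t → ∀ ε : ℝ, 0 < ε → ε < c / 4 →
      volume {x ∈ Set.Ico (0:ℝ) 1 | ∃ j : ℕ, 1 ≤ j ∧ |f j x - t| < ε} <
        ENNReal.ofReal (16 * C / (θ * c ^ 2) * (N * c + Θ) * ε) := by
  intro t ht ε hε hεc
  have hC : 0 < C := hc.trans hcC
  have hΘ : 0 < Θ := hθ.trans hθΘ
  have hbound := mul_le_and_le_mul_of_step hf0 h8
  obtain hS | ⟨x₀, -, j₀, hj₀, hx₀⟩ :=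
    {x ∈ Set.Ico (0:ℝ) 1 | ∃ j : ℕ, 1 ≤ j ∧ |f j x - t| < ε}.eq_empty_or_nonempty
  · rw [hS, measure_empty]
    exact ENNReal.ofReal_pos.mpr (by positivity)
  set j₁ := ⌊(t - ε) / C⌋₊ + 1
  set j₂ := ⌊(t + ε) / c⌋₊
  have hlevel : ∀ j x, 1 ≤ j → |f j x - t| < ε → j ∈ Finset.Icc j₁ j₂ := fun j x hj hjx =>
    mem_Icc_floor_of_abs_sub_lt (by omega) hc hC (hbound j x).1 (hbound j x).2 hjx
  have hεt : 3 * ε < t := by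
    have : c ≤ c * j₀ := le_mul_of_one_le_right hc.le (by exact_mod_cast hj₀)
    linarith [abs_lt.mp hx₀, (hbound j₀ x₀).1]
  have hn₀ : n₀ ≤ j₁ := (Nat.le_floor ((le_div_iff₀ hC).mpr (by linarith))).trans (Nat.le_succ _)
  obtain ⟨hj₁₀, hj₀₂⟩ := Finset.mem_Icc.mp (hlevel j₀ x₀ hj₀ hx₀)
  have hDne : (D j₂).Nonempty :=
    nonempty_of_periodic_of_abs_deriv_pos (hper j₂) (hpw j₂ (by omega)) fun x hx =>
      (mul_pos hθ (by exact_mod_cast (show 0 < j₂ by omega))).trans_le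
        (h10 j₂ (by omega) (by omega) x hx).1
  calc volume {x ∈ Set.Ico (0:ℝ) 1 | ∃ j : ℕ, 1 ≤ j ∧ |f j x - t| < ε}
      ≤ volume {x ∈ Set.Ico (0:ℝ) 1 | ∃ j ∈ Finset.Icc j₁ j₂, |f j x - t| < ε} :=
        measure_mono fun x ⟨hx, j, hj, hjx⟩ => ⟨hx, j, hlevel j x hj hjx, hjx⟩
    _ ≤ _ := volume_exists_abs_sub_lt_le_of_levels f hc hθ hΘ.le hDfin hDsub
        (fun n hn => (h9 n hn).1) (add_mul_le_of_step h8) hpw h10 (by omega) hn₀ (by omega) hε.le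
    _ < _ := (ENNReal.ofReal_lt_ofReal_iff (by positivity)).mpr <|
        levels_estimate_lt hc hC hθ hΘ hε hεc hεt ((ncard_pos (hDfin j₂ (by omega))).mpr hDne)
          (h9 j₂ (by omega)).2 (floor_div_mul_le hc (by linarith)) (lt_mul_floor_div_add_one hC _)

/-- **Lemma 4.2.** Let `(f_n)` be piecewise `C¹` positive functions on `𝕋` (realized as
`1`-periodic functions on `ℝ`, with discontinuity sets contained in the finite sets
`D n ⊆ [0,1)`), satisfying (8) `f_{n-1} + c ≤ f_n ≤ f_{n-1} + C` (with `f₀ ≡ 0`),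
(9) `D n ⊆ D (n+1)` and `#D n ≤ N n`, and (10) `θn ≤ |f_n'| ≤ Θn` off `D n` for
`n ≥ n₀`.  Then for every `t ≥ 2Cn₀` and `0 < ε < c/4`,
`λ({x : ∃ j, |f_j(x) − t| < ε}) < (16C/(θc²))(Nc + Θ)ε`. -/
theorem stmt8 (f : ℕ → ℝ → ℝ) (hper : ∀ n, Function.Periodic (f n) 1)
    (hf0 : ∀ x, f 0 x = 0)
    (hpos : ∀ n, 1 ≤ n → ∀ x, 0 < f n x)
    (c C θ Θ : ℝ) (hc : 0 < c) (hcC : c < C) (hθ : 0 < θ) (hθΘ : θ < Θ)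
    (n₀ N : ℕ)
    (D : ℕ → Set ℝ)
    (hDfin : ∀ n, 1 ≤ n → (D n).Finite)
    (hDsub : ∀ n, 1 ≤ n → D n ⊆ Set.Ico 0 1)
    (h8 : ∀ n : ℕ, 1 ≤ n → ∀ x : ℝ, f (n - 1) x + c ≤ f n x ∧ f n x ≤ f (n - 1) x + C)
    (h9 : ∀ n : ℕ, 1 ≤ n → D n ⊆ D (n + 1) ∧ (D n).ncard ≤ N * n)
    (hpw : ∀ n : ℕ, 1 ≤ n → ∀ u v : ℝ, u < v →
      Set.Ioo u v ∩ {x : ℝ | Int.fract x ∈ D n} = ∅ →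
      ∃ g : ℝ → ℝ, ContDiff ℝ 1 g ∧ Set.EqOn (f n) g (Set.Ioo u v))
    (h10 : ∀ n : ℕ, 1 ≤ n → n₀ ≤ n → ∀ x : ℝ, Int.fract x ∉ D n →
      θ * n ≤ |deriv (f n) x| ∧ |deriv (f n) x| ≤ Θ * n) :
    ∀ t : ℝ, 2 * C * n₀ ≤ t → ∀ ε : ℝ, 0 < ε → ε < c / 4 →
      volume {x ∈ Set.Ico (0:ℝ) 1 | ∃ j : ℕ, 1 ≤ j ∧ |f j x - t| < ε} <
        ENNReal.ofReal (16 * C / (θ * c ^ 2) * (N * c + Θ) * ε) :=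
  stmt8_general f hper hf0 c C θ Θ hc hcC hθ hθΘ n₀ N D hDfin hDsub h8 h9 hpw h10
end

section
/- Let T : (X, 𝓑, μ) → (X, 𝓑, μ) be an ergodic automorphism of a standard probability Borel space and let A ∈ 𝓑. For every ε > 0, δ > 0 and κ > 0 there exist N = N(ε,δ,κ) ∈ ℕ and a set X(ε,δ,κ) ∈ 𝓑 with μ(X(ε,δ,κ)) > 1 − δ such that for all M, L ∈ ℕ with L ≥ N and L/M ≥ κ, |(1/L) · Σ_{n=M}^{M+L} χ_A(Tⁿx) − μ(A)| < ε for every x ∈ X(ε,δ,κ). (Lemma 5.2.) -/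
/-!
Birkhoff's ergodic theorem for `χ_A`, proved as by Katznelson and Weiss: if almost every orbit
starts with some block whose average exceeds `α ≥ 0`, then cutting orbits greedily into such
blocks (using single steps on the small set where no block of length `≤ M` works) and integrating
gives `α ≤ ∫ g`. By ergodicity the limsup of the averages is a.e. a constant, hence at most `∫ g`;
applied to `g` and `1 - g` this yields a.e. convergence. Egorov's theorem makes the convergence
uniform off a set of measure `< δ`. A window sum `∑_{n=M}^{M+L}` is the difference of the
Birkhoff sums of lengths `M + L + 1` and `M`, whose errors are `O((M + L) η)` up to a constant,
and this is small compared with `L` because `M ≤ L / κ`.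
-/

open MeasureTheory Filter Finset Topology

lemma limsup_add_eq_of_tendsto_zero {ι : Type*} {l : Filter ι} [l.NeBot] {u w : ι → ℝ}
    (hu_le : IsBoundedUnder (· ≤ ·) l u) (hu_ge : IsBoundedUnder (· ≥ ·) l u)
    (hw : Tendsto w l (𝓝 0)) : limsup (u + w) l = limsup u l := by
  refine le_antisymm ?_ ?_
  · calc limsup (u + w) l ≤ limsup u l + limsup w l :=
          limsup_add_le hu_ge hu_le hw.isBoundedUnder_ge.isCoboundedUnder_le hw.isBoundedUnder_le
      _ = limsup u l := by rw [hw.limsup_eq, add_zero]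
  · calc limsup u l = limsup u l + liminf w l := by rw [hw.liminf_eq, add_zero]
      _ ≤ limsup (u + w) l :=
          le_limsup_add hu_le hu_ge.isCoboundedUnder_le hw.isBoundedUnder_le hw.isBoundedUnder_ge

section Birkhoff

variable {X : Type*} {T : X → X} {g : X → ℝ}

lemma birkhoffSum_nonneg (hg : 0 ≤ g) (n : ℕ) (x : X) : 0 ≤ birkhoffSum T g n x :=
  sum_nonneg fun _ _ => hg _

lemma birkhoffAverage_nonneg (hg : 0 ≤ g) (n : ℕ) (x : X) : 0 ≤ birkhoffAverage ℝ T g n x :=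
  smul_nonneg (by positivity) (birkhoffSum_nonneg hg n x)

lemma birkhoffAverage_le_one (hg : g ≤ 1) (n : ℕ) (x : X) : birkhoffAverage ℝ T g n x ≤ 1 := by
  rcases n.eq_zero_or_pos with rfl | hn
  · simp
  have hsum : birkhoffSum T g n x ≤ n := by
    simpa [birkhoffSum] using sum_le_sum fun k (_ : k ∈ range n) => hg (T^[k] x)
  rw [birkhoffAverage, smul_eq_mul, inv_mul_le_iff₀ (by positivity), mul_one]
  exact hsum

lemma abs_birkhoffSum_le {C : ℝ} (hg : ∀ x, |g x| ≤ C) (n : ℕ) (x : X) :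
    |birkhoffSum T g n x| ≤ n * C := by
  simpa [birkhoffSum] using
    (abs_sum_le_sum_abs _ _).trans (sum_le_sum fun k (_ : k ∈ range n) => hg (T^[k] x))

/-- Cut the orbit of `x` greedily into the blocks given by `h`; only the last, incomplete block,
of length `< M`, is lost. -/
lemma mul_sub_le_birkhoffSum (hg : 0 ≤ g) {α : ℝ} (hα : 0 ≤ α) {M : ℕ}
    (h : ∀ x, ∃ n ∈ Icc 1 M, α * n ≤ birkhoffSum T g n x) (K : ℕ) (x : X) :
    α * (K - M) ≤ birkhoffSum T g K x := by
  induction K using Nat.strong_induction_on generalizing x with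
  | _ K ih =>
    rcases le_or_gt K M with hKM | hMK
    · exact (mul_nonpos_of_nonneg_of_nonpos hα (by simpa using hKM)).trans
        (birkhoffSum_nonneg hg K x)
    obtain ⟨n, hn, hxn⟩ := h x
    rw [mem_Icc] at hn
    obtain ⟨m, rfl⟩ : ∃ m, K = n + m := ⟨K - n, by omega⟩
    have hrest := ih m (by omega) (T^[n] x)
    rw [birkhoffSum_add]
    push_cast
    linarith

lemma isBoundedUnder_le_birkhoffAverage (hg : g ≤ 1) (x : X) :
    IsBoundedUnder (· ≤ ·) atTop (birkhoffAverage ℝ T g · x) :=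
  isBoundedUnder_of ⟨1, fun n => birkhoffAverage_le_one hg n x⟩

lemma isBoundedUnder_ge_birkhoffAverage (hg : 0 ≤ g) (x : X) :
    IsBoundedUnder (· ≥ ·) atTop (birkhoffAverage ℝ T g · x) :=
  isBoundedUnder_of ⟨0, fun n => birkhoffAverage_nonneg hg n x⟩

lemma limsup_birkhoffAverage_apply (hg0 : 0 ≤ g) (hg1 : g ≤ 1) (x : X) :
    limsup (birkhoffAverage ℝ T g · (T x)) atTop = limsup (birkhoffAverage ℝ T g · x) atTop := by
  have hbdd : Bornology.IsBounded (Set.range g) := (Metric.isBounded_Icc (0 : ℝ) 1).subset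
    (Set.range_subset_iff.2 fun x => ⟨hg0 x, hg1 x⟩)
  rw [← limsup_add_eq_of_tendsto_zero (isBoundedUnder_le_birkhoffAverage hg1 x)
    (isBoundedUnder_ge_birkhoffAverage hg0 x)
    (tendsto_birkhoffAverage_apply_sub_birkhoffAverage' ℝ hbdd T x)]
  congr 1
  ext n
  simp

lemma abs_birkhoffSum_sub_mul_le {C a η : ℝ} {N₀ : ℕ} (hg : ∀ x, |g x| ≤ C) (hη : 0 ≤ η)
    {x : X} (hx : ∀ n ≥ N₀, |birkhoffAverage ℝ T g n x - a| ≤ η) (n : ℕ) :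
    |birkhoffSum T g n x - n * a| ≤ n * η + N₀ * (C + |a|) := by
  have hC : 0 ≤ C + |a| := add_nonneg ((abs_nonneg _).trans (hg x)) (abs_nonneg a)
  rcases lt_or_ge n N₀ with hn | hn
  · have hnN : (n : ℝ) ≤ N₀ := by exact_mod_cast hn.le
    calc |birkhoffSum T g n x - n * a| ≤ |birkhoffSum T g n x| + n * |a| := by
          simpa [abs_mul] using abs_sub (birkhoffSum T g n x) (n * a)
      _ ≤ n * (C + |a|) := by linarith [abs_birkhoffSum_le hg n x (T := T)]
      _ ≤ n * η + N₀ * (C + |a|) := by nlinarith [(Nat.cast_nonneg n : (0 : ℝ) ≤ n)]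
  rcases n.eq_zero_or_pos with rfl | hn0
  · simpa using mul_nonneg (Nat.cast_nonneg N₀) hC
  have hsplit : birkhoffSum T g n x - n * a = n * (birkhoffAverage ℝ T g n x - a) := by
    rw [birkhoffAverage, smul_eq_mul]
    field_simp
  rw [hsplit, abs_mul, Nat.abs_cast]
  nlinarith [hx n hn, mul_nonneg (Nat.cast_nonneg N₀) hC, (Nat.cast_nonneg n : (0 : ℝ) ≤ n)]

lemma abs_window_average_sub_le {s : ℕ → ℝ} {a η C : ℝ} (hη : 0 ≤ η)
    (hs : ∀ n, |s n - n * a| ≤ n * η + C) {M L : ℕ} (hL : 0 < L) :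
    |(s (M + L + 1) - s M) / L - a| ≤ (2 * M / L + 2) * η + (2 * C + |a|) / L := by
  have hL' : (1 : ℝ) ≤ L := Nat.one_le_cast.2 hL
  have hsplit : (s (M + L + 1) - s M) / L - a
      = ((s (M + L + 1) - (M + L + 1 : ℕ) * a) - (s M - M * a) + a) / L := by
    push_cast
    field_simp
    ring
  have hrhs : (2 * M / L + 2) * η + (2 * C + |a|) / L
      = (2 * M * η + 2 * L * η + 2 * C + |a|) / L := by
    field_simp
    ring
  rw [hsplit, hrhs, abs_div, Nat.abs_cast]
  gcongr
  have hsum := hs (M + L + 1)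
  push_cast at hsum ⊢
  calc _ ≤ |s (M + L + 1) - (M + L + 1) * a| + |s M - M * a| + |a| :=
        (abs_add_le _ _).trans (add_le_add_left (abs_sub _ _) _)
    _ ≤ _ := by nlinarith [hs M]

lemma exists_forall_abs_window_average_sub_lt {Z : Set X} {a C : ℝ} (hg : ∀ x, |g x| ≤ C)
    (h : TendstoUniformlyOn (birkhoffAverage ℝ T g) (fun _ => a) atTop Z) {ε κ : ℝ}
    (hε : 0 < ε) (hκ : 0 < κ) :
    ∃ N : ℕ, ∀ M L : ℕ, N ≤ L → κ ≤ (L : ℝ) / M → ∀ x ∈ Z,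
      |(1 / (L : ℝ)) * ∑ n ∈ Icc M (M + L), g (T^[n] x) - a| < ε := by
  -- chosen so that the `η`-term of `abs_window_average_sub_le` is at most `ε / 2` once `M ≤ L / κ`
  set η := ε / (2 * (2 / κ + 2))
  have hη : 0 < η := by positivity
  obtain ⟨N₀, hN₀⟩ := eventually_atTop.1 (Metric.tendstoUniformlyOn_iff.1 h η hη)
  set D := 2 * (N₀ * (C + |a|)) + |a|
  obtain ⟨N, hN⟩ := exists_nat_gt (2 * D / ε)
  refine ⟨N, fun M L hNL hκL x hx => ?_⟩
  have hM : (0 : ℝ) < M := by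
    rcases M.eq_zero_or_pos with rfl | hM
    · simp only [Nat.cast_zero, div_zero] at hκL; linarith
    · exact Nat.cast_pos.2 hM
  have hL : (0 : ℝ) < L := lt_of_lt_of_le (by positivity) ((le_div_iff₀ hM).1 hκL)
  have hs := abs_birkhoffSum_sub_mul_le (T := T) (x := x) hg hη.le fun n hn => by
    rw [← Real.dist_eq, dist_comm]
    exact (hN₀ n hn x hx).le
  have hsum : ∑ n ∈ Icc M (M + L), g (T^[n] x)
      = birkhoffSum T g (M + L + 1) x - birkhoffSum T g M x := by
    rw [← Ico_add_one_right_eq_Icc, sum_Ico_eq_sub _ (by omega)]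
    rfl
  rw [hsum, one_div_mul_eq_div]
  refine (abs_window_average_sub_le hη.le hs (Nat.cast_pos.1 hL)).trans_lt ?_
  have hML : (M : ℝ) / L ≤ 1 / κ := by
    rw [div_le_div_iff₀ hL hκ]
    nlinarith [(le_div_iff₀ hM).1 hκL]
  have hDL : D / L < ε / 2 := by
    rw [div_lt_iff₀ hL]
    have := (div_lt_iff₀ hε).1 (hN.trans_le (Nat.cast_le.2 hNL))
    linarith
  have hcoef : 2 * M / L + 2 ≤ 2 / κ + 2 := by
    rw [mul_div_assoc, div_eq_mul_one_div 2 κ]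
    linarith
  calc (2 * M / L + 2) * η + D / L < (2 / κ + 2) * η + ε / 2 :=
        add_lt_add_of_le_of_lt (mul_le_mul_of_nonneg_right hcoef hη.le) hDL
    _ = ε := by
        simp only [η]
        field_simp
        ring

variable [MeasurableSpace X]

lemma measurable_birkhoffSum (hT : Measurable T) (hg : Measurable g) (n : ℕ) :
    Measurable (birkhoffSum T g n) :=
  Finset.measurable_sum _ fun k _ => hg.comp (hT.iterate k)

lemma measurable_birkhoffAverage (hT : Measurable T) (hg : Measurable g) (n : ℕ) :
    Measurable (birkhoffAverage ℝ T g n) :=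
  (measurable_birkhoffSum hT hg n).const_smul (n : ℝ)⁻¹

variable {μ : Measure X}

lemma ofReal_one_sub_lt_measure_compl [IsProbabilityMeasure μ] {t : Set X} (ht : MeasurableSet t)
    {δ : ℝ} (h : μ.real t < min δ 1) : ENNReal.ofReal (1 - δ) < μ tᶜ := by
  rw [← ofReal_measureReal, probReal_compl_eq_one_sub ht, ENNReal.ofReal_lt_ofReal_iff']
  exact ⟨by linarith [min_le_left δ 1], by linarith [min_le_right δ 1]⟩

lemma MeasureTheory.MeasurePreserving.integrable_birkhoffSum (hT : MeasurePreserving T μ μ)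
    (hg : Integrable g μ) (n : ℕ) : Integrable (birkhoffSum T g n) μ :=
  integrable_finsetSum _ fun k _ => (hT.iterate k).integrable_comp_of_integrable hg

lemma MeasureTheory.MeasurePreserving.integral_birkhoffSum (hT : MeasurePreserving T μ μ)
    (hg : Integrable g μ) (n : ℕ) : ∫ x, birkhoffSum T g n x ∂μ = n * ∫ x, g x ∂μ := by
  have hcomp (k : ℕ) : ∫ x, g (T^[k] x) ∂μ = ∫ x, g x ∂μ := by
    rw [← integral_map (hT.iterate k).measurable.aemeasurable
      (by simpa [(hT.iterate k).map_eq] using hg.aestronglyMeasurable), (hT.iterate k).map_eq]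
  calc ∫ x, birkhoffSum T g n x ∂μ = ∑ k ∈ range n, ∫ x, g (T^[k] x) ∂μ :=
        integral_finsetSum _ fun k _ => (hT.iterate k).integrable_comp_of_integrable hg
    _ = n * ∫ x, g x ∂μ := by simp [hcomp]

lemma MeasureTheory.MeasurePreserving.le_integral_add_measureReal_compl [IsProbabilityMeasure μ]
    (hT : MeasurePreserving T μ μ) (hg : Measurable g) (hgi : Integrable g μ) (hg0 : 0 ≤ g)
    {α : ℝ} (hα : 0 ≤ α) {M : ℕ} (hM : 1 ≤ M) :
    α ≤ ∫ x, g x ∂μ + μ.real (⋃ n ∈ Icc 1 M, {x | α < birkhoffAverage ℝ T g n x})ᶜ * α := by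
  set E := ⋃ n ∈ Icc 1 M, {x | α < birkhoffAverage ℝ T g n x}
  have hE : MeasurableSet E := Finset.measurableSet_biUnion _ fun n _ =>
    measurableSet_lt measurable_const (measurable_birkhoffAverage hT.measurable hg n)
  -- On `Eᶜ` a single step of `g'` already has average at least `α`.
  set g' := g + Eᶜ.indicator fun _ => α
  have hind_nonneg : 0 ≤ Eᶜ.indicator fun _ => α := Set.indicator_nonneg fun _ _ => hα
  have hind_int : Integrable (Eᶜ.indicator fun _ => α) μ := (integrable_const α).indicator hE.compl
  have hcover : ∀ x, ∃ n ∈ Icc 1 M, α * n ≤ birkhoffSum T g' n x := by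
    intro x
    by_cases hx : x ∈ E
    · obtain ⟨n, hn, hlt⟩ := Set.mem_iUnion₂.1 hx
      have hn0 : (0 : ℝ) < n := Nat.cast_pos.2 (mem_Icc.1 hn).1
      rw [Set.mem_ofPred_eq, birkhoffAverage, smul_eq_mul, lt_inv_mul_iff₀ hn0, mul_comm] at hlt
      refine ⟨n, hn, hlt.le.trans (sum_le_sum fun k _ => ?_)⟩
      exact le_add_of_nonneg_right (hind_nonneg _)
    · exact ⟨1, mem_Icc.2 ⟨le_rfl, hM⟩, by simpa [g', hx] using hg0 x⟩
  have hK (K : ℕ) : α * (K - M) ≤ K * ∫ x, g' x ∂μ := by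
    rw [← hT.integral_birkhoffSum (hgi.add hind_int)]
    simpa using integral_mono (integrable_const _)
      (hT.integrable_birkhoffSum (hgi.add hind_int) K)
      (mul_sub_le_birkhoffSum (add_nonneg hg0 hind_nonneg) hα hcover K)
  have hαg' : α ≤ ∫ x, g' x ∂μ := by
    by_contra! hlt
    obtain ⟨K, hK'⟩ := exists_nat_gt (α * M / (α - ∫ x, g' x ∂μ))
    rw [div_lt_iff₀ (sub_pos.2 hlt)] at hK'
    nlinarith [hK K]
  rwa [show ∫ x, g' x ∂μ = _ from integral_add hgi hind_int,
    integral_indicator_const _ hE.compl, smul_eq_mul] at hαg'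

lemma MeasureTheory.MeasurePreserving.le_integral_of_ae_exists_lt_birkhoffAverage
    [IsProbabilityMeasure μ] (hT : MeasurePreserving T μ μ) (hg : Measurable g)
    (hgi : Integrable g μ) (hg0 : 0 ≤ g) {α : ℝ} (hα : 0 ≤ α)
    (h : ∀ᵐ x ∂μ, ∃ n, 0 < n ∧ α < birkhoffAverage ℝ T g n x) :
    α ≤ ∫ x, g x ∂μ := by
  set E : ℕ → Set X := fun M => ⋃ n ∈ Icc 1 M, {x | α < birkhoffAverage ℝ T g n x}
  have hE_meas (M : ℕ) : MeasurableSet (E M) := Finset.measurableSet_biUnion _ fun n _ =>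
    measurableSet_lt measurable_const (measurable_birkhoffAverage hT.measurable hg n)
  have hE_mono : Monotone E := fun M M' hM =>
    Set.biUnion_subset_biUnion_left (coe_subset.2 (Icc_subset_Icc_right hM))
  have hnull : μ (⋂ M, (E M)ᶜ) = 0 := by
    refine measure_mono_null (fun x hx => ?_) (ae_iff.1 h)
    rintro ⟨n, hn, hlt⟩
    exact Set.mem_iInter.1 hx n (Set.mem_biUnion (mem_Icc.2 ⟨hn, le_rfl⟩) hlt)
  have hlim := tendsto_measure_iInter_atTop (fun M => (hE_meas M).compl.nullMeasurableSet)
    (fun _ _ hM => Set.compl_subset_compl.2 (hE_mono hM)) ⟨0, measure_ne_top μ _⟩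
  rw [hnull] at hlim
  have hE_small : Tendsto (fun M => μ.real (E M)ᶜ) atTop (𝓝 0) :=
    (ENNReal.tendsto_toReal ENNReal.zero_ne_top).comp hlim
  refine ge_of_tendsto ?_ ((eventually_ge_atTop 1).mono fun M hM =>
    hT.le_integral_add_measureReal_compl hg hgi hg0 hα hM)
  simpa only [zero_mul, add_zero] using tendsto_const_nhds.add (hE_small.mul_const α)

lemma Ergodic.ae_limsup_birkhoffAverage_le_integral [IsProbabilityMeasure μ] (hT : Ergodic T μ)
    (hg : Measurable g) (hg0 : 0 ≤ g) (hg1 : g ≤ 1) :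
    ∀ᵐ x ∂μ, limsup (birkhoffAverage ℝ T g · x) atTop ≤ ∫ x, g x ∂μ := by
  have hφ : Measurable fun x => limsup (birkhoffAverage ℝ T g · x) atTop :=
    Measurable.limsup fun n => measurable_birkhoffAverage hT.measurable hg n
  obtain ⟨c, hc⟩ := hT.toPreErgodic.ae_eq_const_of_ae_eq_comp hφ
    (funext fun x => limsup_birkhoffAverage_apply hg0 hg1 x)
  suffices c ≤ ∫ x, g x ∂μ from hc.mono fun x hx => hx.trans_le this
  refine le_of_forall_lt_imp_le_of_dense fun α hα => ?_
  rcases lt_or_ge α 0 with hα0 | hα0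
  · exact hα0.le.trans (integral_nonneg hg0)
  refine hT.toMeasurePreserving.le_integral_of_ae_exists_lt_birkhoffAverage hg
    (Integrable.of_mem_Icc 0 1 hg.aemeasurable (ae_of_all _ fun x => ⟨hg0 x, hg1 x⟩)) hg0 hα0 ?_
  filter_upwards [hc] with x (hx : _ = c)
  have hfreq := frequently_lt_of_lt_limsup
    (isBoundedUnder_ge_birkhoffAverage hg0 x).isCoboundedUnder_le (hx.symm ▸ hα)
  obtain ⟨n, hlt, hn⟩ := (hfreq.and_eventually (eventually_gt_atTop 0)).exists
  exact ⟨n, hn, hlt⟩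

theorem Ergodic.ae_tendsto_birkhoffAverage [IsProbabilityMeasure μ] (hT : Ergodic T μ)
    (hg : Measurable g) (hg0 : 0 ≤ g) (hg1 : g ≤ 1) :
    ∀ᵐ x ∂μ, Tendsto (birkhoffAverage ℝ T g · x) atTop (𝓝 (∫ x, g x ∂μ)) := by
  have hint : ∫ x, (1 - g) x ∂μ = 1 - ∫ x, g x ∂μ := by
    simp only [Pi.sub_apply, Pi.one_apply]
    rw [integral_sub (integrable_const 1)
      (Integrable.of_mem_Icc 0 1 hg.aemeasurable (ae_of_all _ fun x => ⟨hg0 x, hg1 x⟩))]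
    simp
  filter_upwards [hT.ae_limsup_birkhoffAverage_le_integral hg hg0 hg1,
    hT.ae_limsup_birkhoffAverage_le_integral (g := 1 - g) (measurable_one.sub hg)
      (sub_nonneg.2 hg1) (sub_le_self 1 hg0)] with x hle hle'
  refine tendsto_order.2 ⟨fun a ha => ?_, fun b hb =>
    eventually_lt_of_limsup_lt (hle.trans_lt hb) (isBoundedUnder_le_birkhoffAverage hg1 x)⟩
  have hcompl : ∀ᶠ n in atTop, birkhoffAverage ℝ T (1 - g) n x < 1 - a :=
    eventually_lt_of_limsup_lt (by linarith)
      (isBoundedUnder_le_birkhoffAverage (sub_le_self 1 hg0) x)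
  filter_upwards [hcompl, eventually_ne_atTop 0] with n hn hn0
  rw [birkhoffAverage_sub, Pi.sub_apply, Pi.sub_apply,
    birkhoffAverage_of_comp_eq ℝ (rfl : (1 : X → ℝ) ∘ T = 1) (Nat.cast_ne_zero.2 hn0)] at hn
  simp only [Pi.one_apply] at hn
  linarith

end Birkhoff

theorem stmt9_general {X : Type*} [MeasurableSpace X]
    (μ : Measure X) [IsProbabilityMeasure μ]
    (T : X → X) (hT : Ergodic T μ)
    (A : Set X) (hA : MeasurableSet A)
    (ε δ κ : ℝ) (hε : 0 < ε) (hδ : 0 < δ) (hκ : 0 < κ) :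
    ∃ N : ℕ, ∃ Z : Set X, MeasurableSet Z ∧ μ Z > ENNReal.ofReal (1 - δ) ∧
      ∀ M L : ℕ, N ≤ L → κ ≤ (L : ℝ) / (M : ℝ) → ∀ x ∈ Z,
        |(1 / (L : ℝ)) * ∑ n ∈ Finset.Icc M (M + L), A.indicator (fun _ => (1 : ℝ)) (T^[n] x)
            - (μ A).toReal| < ε := by
  set χ : X → ℝ := A.indicator fun _ => 1
  have hχ : Measurable χ := measurable_const.indicator hA
  have hχ0 : 0 ≤ χ := Set.indicator_nonneg fun _ _ => zero_le_one
  have hχ1 : χ ≤ 1 := Set.indicator_le_self' fun _ _ => zero_le_one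
  have hχA : ∫ x, χ x ∂μ = (μ A).toReal := by
    simp [χ, integral_indicator_const _ hA, measureReal_def]
  obtain ⟨t, ht, hμt, hunif⟩ := tendstoUniformlyOn_of_ae_tendsto'
    (fun n => (measurable_birkhoffAverage hT.measurable hχ n).stronglyMeasurable)
    stronglyMeasurable_const (hT.ae_tendsto_birkhoffAverage hχ hχ0 hχ1)
    (show 0 < min δ 1 / 2 by positivity)
  rw [hχA] at hunif
  obtain ⟨N, hN⟩ := exists_forall_abs_window_average_sub_lt
    (fun x => abs_le.2 ⟨(neg_nonpos.2 zero_le_one).trans (hχ0 x), hχ1 x⟩) hunif hε hκ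
  refine ⟨N, tᶜ, ht.compl, ofReal_one_sub_lt_measure_compl ht ?_, hN⟩
  have := ENNReal.toReal_le_of_le_ofReal (by positivity) hμt
  rw [measureReal_def]
  linarith [lt_min hδ one_pos]

/-- **Lemma 5.2.** Let `T` be an ergodic automorphism of a standard probability Borel
space `(X, 𝓑, μ)` and `A ∈ 𝓑`.  For all `ε, δ, κ > 0` there are `N ∈ ℕ` and a measurable
set of measure `> 1 − δ` on which every Birkhoff average `(1/L) ∑_{n=M}^{M+L} χ_A(Tⁿx)`
with `L ≥ N`, `L/M ≥ κ` is `ε`-close to `μ(A)`. -/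
theorem stmt9 {X : Type*} [MeasurableSpace X] [StandardBorelSpace X]
    (μ : Measure X) [IsProbabilityMeasure μ]
    (T : X → X) (hbij : Function.Bijective T) (hT : Ergodic T μ)
    (A : Set X) (hA : MeasurableSet A)
    (ε δ κ : ℝ) (hε : 0 < ε) (hδ : 0 < δ) (hκ : 0 < κ) :
    ∃ N : ℕ, ∃ Z : Set X, MeasurableSet Z ∧ μ Z > ENNReal.ofReal (1 - δ) ∧
      ∀ M L : ℕ, N ≤ L → κ ≤ (L : ℝ) / (M : ℝ) → ∀ x ∈ Z,
        |(1 / (L : ℝ)) * ∑ n ∈ Finset.Icc M (M + L), A.indicator (fun _ => (1 : ℝ)) (T^[n] x)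
            - (μ A).toReal| < ε :=
  stmt9_general μ T hT A hA ε δ κ hε hδ hκ
end

section
/- Let (S_t)_{t∈ℝ} and (T_t)_{t∈ℝ} be ergodic measure-preserving flows acting on (X, 𝓑, μ) and (Y, 𝓒, ν) respectively, where (X,d) is a σ-compact metric space with Borel probability measure μ and (Y, 𝓒, ν) is a standard probability Borel space. Let ρ be a Borel probability measure on X × Y with marginals μ and ν which is invariant under S_t × T_t for all t ∈ ℝ and ergodic for the single automorphism S₁ × T₁. Assume that (S_t) and (X,d) satisfy the almost-continuity condition (15). Let P ⊂ ℝ be a nonempty compact set, let A ∈ 𝓑 with μ(∂A) = 0, and let B ∈ 𝓒. Then for every ε, δ, κ > 0 there exist N = N(ε,δ,κ) ∈ ℕ and a measurable set Θ(ε,δ,κ) ⊂ X × Y with ρ(Θ(ε,δ,κ)) > 1 − δ such that for all M, L ∈ ℕ with L ≥ N and L/M ≥ κ, |(1/L) · Σ_{j=M}^{M+L} χ_{S_{−p}A × B}(S_j x, T_j y) − ρ(S_{−p}A × B)| < ε for all (x,y) ∈ Θ(ε,δ,κ) and all p ∈ P. (Lemma 5.4.) -/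
/-!
Put `R = S₁ × T₁`, so that `(S_j x, T_j y) = R^j (x, y)` and the sum in question is a window
average `(1/L) ∑_{M ≤ j ≤ M+L}` of an indicator along the orbit of the ergodic map `R`.
Birkhoff's theorem for `R` (derived from Garsia's maximal inequality) and Egorov's theorem give
uniform convergence of Birkhoff averages off a set of small measure, hence of window averages
once `L ≥ N` and `M ≤ L / κ`; finitely many sets can be handled at once.

Uniformity in `p ∈ P` comes from compactness: cover `P` by finitely many `ε₁`-balls around
points `p'`. On the set `Xe` of (15) the flow moves points by less than `r` in time `ε₁`, so
`S_{-p}A × B` lies between `S_{-p'}A⁻ × B` and `S_{-p'}A⁺ × B` up to the set where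
`S_{p'} x ∉ Xe`, where `A⁺ = thickening r A` and `A⁻ = (thickening r Aᶜ)ᶜ`. Since
`μ (∂A) = 0`, `μ (A⁺ \ A⁻)` is small for small `r`, so it suffices to control the window
averages of the finitely many sets built from the points `p'`.
-/

open MeasureTheory Filter Set Topology Metric

section MaximalErgodic

variable {Z : Type*} {R : Z → Z} {f : Z → ℝ} {C : ℝ}

lemma abs_birkhoffSum_le_s10 (hC : ∀ z, |f z| ≤ C) (n : ℕ) (z : Z) :
    |birkhoffSum R f n z| ≤ n * C :=
  calc |birkhoffSum R f n z| ≤ ∑ k ∈ Finset.range n, |f (R^[k] z)| :=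
        Finset.abs_sum_le_sum_abs _ _
    _ ≤ ∑ _k ∈ Finset.range n, C := Finset.sum_le_sum fun k _ => hC (R^[k] z)
    _ = n * C := by simp

lemma partialSups_birkhoffSum_nonneg (N : ℕ) (z : Z) :
    0 ≤ partialSups (birkhoffSum R f) N z := by
  simpa [birkhoffSum_zero] using le_partialSups_of_le (birkhoffSum R f) (Nat.zero_le N) z

lemma abs_partialSups_birkhoffSum_le (hC : ∀ z, |f z| ≤ C) (N : ℕ) (z : Z) :
    |partialSups (birkhoffSum R f) N z| ≤ N * C := by
  obtain ⟨n, hnN, hn⟩ := exists_partialSups_eq (birkhoffSum R f · z) N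
  rw [← Pi.partialSups_apply] at hn
  have hC0 : 0 ≤ C := (abs_nonneg _).trans (hC z)
  calc |partialSups (birkhoffSum R f) N z| = |birkhoffSum R f n z| := by rw [hn]
    _ ≤ n * C := abs_birkhoffSum_le_s10 hC n z
    _ ≤ N * C := by gcongr

/-- Garsia's pointwise inequality: a positive running maximum is attained by a sum of positive
length, and such a sum starts with `f z`. -/
lemma partialSups_birkhoffSum_sub_comp_le (N : ℕ) (z : Z) :
    partialSups (birkhoffSum R f) N z - partialSups (birkhoffSum R f) N (R z) ≤
      {w | 0 < partialSups (birkhoffSum R f) N w}.indicator f z := by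
  set E := {w | 0 < partialSups (birkhoffSum R f) N w}
  have hRz := partialSups_birkhoffSum_nonneg (R := R) (f := f) N (R z)
  by_cases hz : z ∈ E
  · obtain ⟨n, hnN, hn⟩ := exists_partialSups_eq (birkhoffSum R f · z) N
    rw [← Pi.partialSups_apply] at hn
    rw [indicator_of_mem hz, hn]
    cases n with
    | zero => simp [E, hn, birkhoffSum_zero] at hz
    | succ m =>
      have hm : birkhoffSum R f m (R z) ≤ partialSups (birkhoffSum R f) N (R z) :=
        le_partialSups_of_le (birkhoffSum R f) (by omega : m ≤ N) (R z)
      rw [birkhoffSum_succ']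
      linarith
  · rw [indicator_of_notMem hz,
      le_antisymm (not_lt.1 hz) (partialSups_birkhoffSum_nonneg N z)]
    linarith

variable [MeasurableSpace Z] {μ : Measure Z}

lemma measurable_birkhoffSum_s10 (hR : Measurable R) (hf : Measurable f) (n : ℕ) :
    Measurable (birkhoffSum R f n) :=
  Finset.measurable_sum _ fun k _ => hf.comp (hR.iterate k)

lemma measurable_partialSups_birkhoffSum (hR : Measurable R) (hf : Measurable f) (N : ℕ) :
    Measurable (partialSups (birkhoffSum R f) N) := by
  rw [partialSups_apply]
  exact Finset.measurable_sup' _ fun n _ => measurable_birkhoffSum_s10 hR hf n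

variable [IsFiniteMeasure μ]

lemma setIntegral_partialSups_birkhoffSum_pos_nonneg (hR : MeasurePreserving R μ μ)
    (hf : Measurable f) (hC : ∀ z, |f z| ≤ C) (N : ℕ) :
    0 ≤ ∫ z in {w | 0 < partialSups (birkhoffSum R f) N w}, f z ∂μ := by
  set M := partialSups (birkhoffSum R f) N
  have hM : Measurable M := measurable_partialSups_birkhoffSum hR.measurable hf N
  have hMint : Integrable M μ := .of_bound hM.aestronglyMeasurable (N * C)
    (ae_of_all _ fun z => abs_partialSups_birkhoffSum_le hC N z)
  have hMRint : Integrable (fun z => M (R z)) μ := hR.integrable_comp_of_integrable hMint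
  have hMR : ∫ z, M (R z) ∂μ = ∫ z, M z ∂μ := by
    conv_rhs => rw [← hR.map_eq]
    exact (integral_map hR.aemeasurable hM.aestronglyMeasurable).symm
  have hE : MeasurableSet {w | 0 < M w} := measurableSet_lt measurable_const hM
  rw [← integral_indicator hE]
  calc 0 = ∫ z, (M z - M (R z)) ∂μ := by rw [integral_sub hMint hMRint, hMR, sub_self]
    _ ≤ _ := integral_mono (hMint.sub hMRint)
        ((Integrable.of_bound hf.aestronglyMeasurable C (ae_of_all _ hC)).indicator hE)
        (partialSups_birkhoffSum_sub_comp_le N)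

/-- The maximal ergodic theorem, for bounded functions. -/
theorem setIntegral_exists_birkhoffSum_pos_nonneg (hR : MeasurePreserving R μ μ)
    (hf : Measurable f) (hC : ∀ z, |f z| ≤ C) :
    0 ≤ ∫ z in {w | ∃ n, 0 < birkhoffSum R f n w}, f z ∂μ := by
  have hU : {w | ∃ n, 0 < birkhoffSum R f n w} =
      ⋃ N, {w | 0 < partialSups (birkhoffSum R f) N w} := by
    ext z
    simp only [mem_ofPred_eq, mem_iUnion]
    constructor
    · rintro ⟨n, hn⟩
      exact ⟨n, hn.trans_le (le_partialSups (birkhoffSum R f) n z)⟩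
    · rintro ⟨N, hN⟩
      obtain ⟨n, -, hn⟩ := exists_partialSups_eq (birkhoffSum R f · z) N
      exact ⟨n, by rwa [Pi.partialSups_apply, hn] at hN⟩
  rw [hU]
  refine ge_of_tendsto (tendsto_setIntegral_of_monotone (fun N => ?_) ?_ ?_)
    (.of_forall (setIntegral_partialSups_birkhoffSum_pos_nonneg hR hf hC))
  · exact measurableSet_lt measurable_const (measurable_partialSups_birkhoffSum hR.measurable hf N)
  · exact fun N N' h z hz => lt_of_lt_of_le hz (partialSups_monotone (birkhoffSum R f) h z)
  · exact (Integrable.of_bound hf.aestronglyMeasurable C (ae_of_all _ hC)).integrableOn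

lemma integral_nonneg_of_ae_exists_birkhoffSum_pos (hR : MeasurePreserving R μ μ)
    (hf : Measurable f) (hC : ∀ z, |f z| ≤ C)
    (hpos : ∀ᵐ z ∂μ, ∃ n, 0 < birkhoffSum R f n z) :
    0 ≤ ∫ z, f z ∂μ := by
  rw [← setIntegral_eq_integral_of_ae_compl_eq_zero (s := {w | ∃ n, 0 < birkhoffSum R f n w})]
  · exact setIntegral_exists_birkhoffSum_pos_nonneg hR hf hC
  · filter_upwards [hpos] with z hz hz'
    exact absurd hz hz'

end MaximalErgodic

section Birkhoff

variable {Z : Type*} {R : Z → Z} {f : Z → ℝ} {C : ℝ}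

lemma abs_birkhoffAverage_le (hC : ∀ z, |f z| ≤ C) (n : ℕ) (z : Z) :
    |birkhoffAverage ℝ R f n z| ≤ C := by
  rcases n.eq_zero_or_pos with rfl | hn
  · simpa using (abs_nonneg _).trans (hC z)
  rw [birkhoffAverage, smul_eq_mul, abs_mul, abs_inv, Nat.abs_cast,
    inv_mul_le_iff₀ (by exact_mod_cast hn)]
  exact abs_birkhoffSum_le_s10 hC n z

lemma birkhoffSum_eq_mul_birkhoffAverage {n : ℕ} (hn : n ≠ 0) (z : Z) :
    birkhoffSum R f n z = n * birkhoffAverage ℝ R f n z := by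
  rw [birkhoffAverage, smul_eq_mul, mul_inv_cancel_left₀ (Nat.cast_ne_zero.2 hn)]

lemma birkhoffSum_sub_const (a : ℝ) (n : ℕ) (z : Z) :
    birkhoffSum R (fun w => f w - a) n z = birkhoffSum R f n z - n * a := by
  simp [birkhoffSum, Finset.sum_sub_distrib]

lemma limsup_eq_limsup_of_tendsto_sub {u v : ℕ → ℝ}
    (hu : ∀ n, |u n| ≤ C) (hv : ∀ n, |v n| ≤ C)
    (h : Tendsto (fun n => u n - v n) atTop (𝓝 0)) : limsup u atTop = limsup v atTop := by
  have key : ∀ {u v : ℕ → ℝ}, (∀ n, |v n| ≤ C) →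
      Tendsto (fun n => u n - v n) atTop (𝓝 0) → limsup u atTop ≤ limsup v atTop :=
      fun {u v} hv h =>
    calc limsup u atTop = limsup (v + (u - v)) atTop := by rw [add_sub_cancel]
      _ ≤ limsup v atTop + limsup (u - v) atTop :=
          limsup_add_le (isBoundedUnder_of ⟨-C, fun n => (abs_le.1 (hv n)).1⟩)
            (isBoundedUnder_of ⟨C, fun n => (abs_le.1 (hv n)).2⟩)
            h.isBoundedUnder_ge.isCoboundedUnder_le h.isBoundedUnder_le
      _ = limsup v atTop := by rw [show u - v = fun n => u n - v n from rfl, h.limsup_eq, add_zero]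
  refine le_antisymm (key hv h) (key hu ?_)
  simpa using h.neg

lemma limsup_birkhoffAverage_apply_s10 (hC : ∀ z, |f z| ≤ C) (z : Z) :
    limsup (birkhoffAverage ℝ R f · (R z)) atTop = limsup (birkhoffAverage ℝ R f · z) atTop :=
  limsup_eq_limsup_of_tendsto_sub (abs_birkhoffAverage_le hC · (R z))
    (abs_birkhoffAverage_le hC · z)
    (tendsto_birkhoffAverage_apply_sub_birkhoffAverage' ℝ
      (isBounded_iff_forall_norm_le.2 ⟨C, by rintro _ ⟨w, rfl⟩; exact hC w⟩) R z)

variable [MeasurableSpace Z] {μ : Measure Z} [IsProbabilityMeasure μ]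

lemma measurable_birkhoffAverage_s10 (hR : Measurable R) (hf : Measurable f) (n : ℕ) :
    Measurable (birkhoffAverage ℝ R f n) :=
  show Measurable ((n : ℝ)⁻¹ • birkhoffSum R f n) from
    (measurable_birkhoffSum_s10 hR hf n).const_smul _

lemma abs_integral_le_of_abs_le (hC : ∀ z, |f z| ≤ C) : |∫ z, f z ∂μ| ≤ C := by
  simpa using norm_integral_le_of_norm_le_const (μ := μ) (f := f) (C := C) (ae_of_all _ hC)

/-- The set where the limsup of the averages exceeds `∫ f + ε` is invariant, and on it
`f - (∫ f + ε)` has a positive Birkhoff sum at every point; by ergodicity and the maximal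
ergodic theorem it is null. -/
lemma ae_limsup_birkhoffAverage_le (hR : Ergodic R μ) (hf : Measurable f)
    (hC : ∀ z, |f z| ≤ C) :
    ∀ᵐ z ∂μ, limsup (birkhoffAverage ℝ R f · z) atTop ≤ ∫ w, f w ∂μ := by
  set c := ∫ w, f w ∂μ
  set φ : Z → ℝ := fun z => limsup (birkhoffAverage ℝ R f · z) atTop
  have hφ : Measurable φ :=
    Measurable.limsup fun n => measurable_birkhoffAverage_s10 hR.measurable hf n
  have hle : ∀ ε > 0, ∀ᵐ z ∂μ, φ z ≤ c + ε := by
    intro ε hε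
    have hinv : R ⁻¹' {z | c + ε < φ z} = {z | c + ε < φ z} := by
      ext z
      simp only [mem_preimage, mem_ofPred_eq, φ, limsup_birkhoffAverage_apply_s10 hC]
    rcases hR.ae_mem_or_ae_notMem (measurableSet_lt measurable_const hφ) hinv with hE | hE
    · have hpos : ∀ᵐ z ∂μ, ∃ n, 0 < birkhoffSum R (fun w => f w - (c + ε)) n z := by
        filter_upwards [hE] with z hz
        have hcob : IsCoboundedUnder (· ≤ ·) atTop (birkhoffAverage ℝ R f · z) :=
          (isBoundedUnder_of ⟨-C, fun n =>
            (abs_le.1 (abs_birkhoffAverage_le hC n z)).1⟩).isCoboundedUnder_le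
        obtain ⟨n, hn, hlt⟩ := frequently_atTop.1 (frequently_lt_of_lt_limsup hcob hz) 1
        refine ⟨n, ?_⟩
        rw [birkhoffSum_sub_const, birkhoffSum_eq_mul_birkhoffAverage (by omega), ← mul_sub]
        exact mul_pos (by exact_mod_cast hn) (sub_pos.2 hlt)
      have hnonneg := integral_nonneg_of_ae_exists_birkhoffSum_pos hR.toMeasurePreserving
        (hf.sub_const _) (fun z => (abs_sub _ _).trans (add_le_add (hC z) le_rfl)) hpos
      rw [integral_sub (Integrable.of_bound hf.aestronglyMeasurable C (ae_of_all _ hC))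
        (integrable_const _), integral_const] at hnonneg
      simp only [probReal_univ, one_smul] at hnonneg
      linarith
    · filter_upwards [hE] with z hz using not_lt.1 hz
  filter_upwards [ae_all_iff.2 fun k : ℕ => hle (1 / (k + 1)) Nat.one_div_pos_of_nat] with z hz
  simpa using ge_of_tendsto'
    ((tendsto_const_nhds (x := c)).add tendsto_one_div_add_atTop_nhds_zero_nat) hz

/-- Birkhoff's pointwise ergodic theorem, for bounded functions. -/
theorem ae_tendsto_birkhoffAverage (hR : Ergodic R μ) (hf : Measurable f)
    (hC : ∀ z, |f z| ≤ C) :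
    ∀ᵐ z ∂μ, Tendsto (birkhoffAverage ℝ R f · z) atTop (𝓝 (∫ w, f w ∂μ)) := by
  have hC' : ∀ z, |(-f) z| ≤ C := by simpa using hC
  filter_upwards [ae_limsup_birkhoffAverage_le hR hf hC,
    ae_limsup_birkhoffAverage_le hR hf.neg hC'] with z hsup hinf
  have hbdd : ∀ g : Z → ℝ, (∀ z, |g z| ≤ C) →
      IsBoundedUnder (· ≤ ·) atTop (birkhoffAverage ℝ R g · z) := fun g hg =>
    isBoundedUnder_of ⟨C, fun n => (abs_le.1 (abs_birkhoffAverage_le hg n z)).2⟩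
  refine tendsto_order.2 ⟨fun a ha => ?_, fun b hb =>
    eventually_lt_of_limsup_lt (hsup.trans_lt hb) (hbdd f hC)⟩
  have hneg : limsup (birkhoffAverage ℝ R (-f) · z) atTop < -a := by
    simp only [Pi.neg_apply, integral_neg] at hinf
    exact hinf.trans_lt (neg_lt_neg ha)
  filter_upwards [eventually_lt_of_limsup_lt hneg (hbdd (-f) hC')] with n hn
  simp only [birkhoffAverage_neg, Pi.neg_apply] at hn
  linarith

end Birkhoff

section WindowAverage

variable {Z : Type*} {R : Z → Z} {f : Z → ℝ} {C : ℝ}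

/-- The average `(1/L) ∑_{j=M}^{M+L} g (R^j z)` of the theorem: `L + 1` terms, divided by `L`. -/
noncomputable def windowAverage (R : Z → Z) (g : Z → ℝ) (M L : ℕ) (z : Z) : ℝ :=
  (1 / (L : ℝ)) * ∑ j ∈ Finset.Icc M (M + L), g (R^[j] z)

lemma windowAverage_eq_birkhoffSum_sub (g : Z → ℝ) (M L : ℕ) (z : Z) :
    windowAverage R g M L z = (birkhoffSum R g (M + L + 1) z - birkhoffSum R g M z) / L := by
  rw [windowAverage, ← Finset.Ico_add_one_right_eq_Icc, Finset.sum_Ico_eq_sub _ (by omega),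
    one_div_mul_eq_div]
  rfl

lemma abs_increment_div_sub_le {s : ℕ → ℝ} {c ε K κ : ℝ} (hε : 0 ≤ ε) (hκ : 0 < κ)
    (hs : ∀ n, |s n - n * c| ≤ ε * n + K) {M L : ℕ} (hL : 0 < L)
    (hκL : κ ≤ (L : ℝ) / M) :
    |(s (M + L + 1) - s M) / L - c| ≤ ε * (2 / κ + 2) + (2 * K + |c|) / L := by
  have hL' : (0 : ℝ) < L := by exact_mod_cast hL
  have h₁ := hs (M + L + 1)
  have h₂ := hs M
  push_cast at h₁
  have hML : (2 * M + L + 1 : ℝ) ≤ L * (2 / κ + 2) := by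
    have hκM : κ * M ≤ L := by
      rcases Nat.eq_zero_or_pos M with rfl | hM
      · simp [hL'.le]
      · exact (le_div_iff₀ (by exact_mod_cast hM)).1 hκL
    have : (2 * M : ℝ) ≤ L * 2 / κ := by rw [le_div_iff₀ hκ]; linarith
    have : (1 : ℝ) ≤ L := by exact_mod_cast hL
    rw [mul_add, mul_div_assoc']
    linarith
  have hsplit : (s (M + L + 1) - s M) / L - c =
      ((s (M + L + 1) - (M + L + 1) * c) - (s M - M * c) + c) / L := by
    field_simp
    ring
  rw [hsplit, abs_div, abs_of_pos hL']
  calc _ ≤ (ε * (2 * M + L + 1) + (2 * K + |c|)) / L := by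
        gcongr
        calc _ ≤ |s (M + L + 1) - (M + L + 1) * c| + |s M - M * c| + |c| :=
              (abs_add_le _ _).trans (add_le_add_left (abs_sub _ _) _)
          _ ≤ _ := by linarith
    _ ≤ (ε * (L * (2 / κ + 2)) + (2 * K + |c|)) / L := by gcongr
    _ = ε * (2 / κ + 2) + (2 * K + |c|) / L := by field_simp

lemma abs_birkhoffSum_sub_le_of_forall_ge {c ε : ℝ} {N₀ : ℕ} {z : Z}
    (hC : ∀ z, |f z| ≤ C) (hc : |c| ≤ C) (hε : 0 ≤ ε)
    (h : ∀ n ≥ N₀, |birkhoffAverage ℝ R f n z - c| < ε) (n : ℕ) :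
    |birkhoffSum R f n z - n * c| ≤ ε * n + 2 * N₀ * C := by
  have hC0 : 0 ≤ C := (abs_nonneg _).trans hc
  have hn0 : (0 : ℝ) ≤ n := Nat.cast_nonneg n
  rcases Nat.eq_zero_or_pos n with rfl | hn
  · simpa using by positivity
  by_cases hnN : N₀ ≤ n
  · rw [birkhoffSum_eq_mul_birkhoffAverage hn.ne', ← mul_sub, abs_mul, Nat.abs_cast, mul_comm]
    nlinarith [h n hnN, Nat.cast_nonneg (α := ℝ) N₀]
  · have hn' : (n : ℝ) ≤ N₀ := by exact_mod_cast (not_le.1 hnN).le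
    calc |birkhoffSum R f n z - n * c| ≤ |birkhoffSum R f n z| + n * |c| := by
          simpa [abs_mul] using abs_sub (birkhoffSum R f n z) (n * c)
      _ ≤ n * C + n * C := add_le_add (abs_birkhoffSum_le_s10 hC n z) (by gcongr)
      _ ≤ ε * n + 2 * N₀ * C := by nlinarith

lemma indicator_one_le_add_of_subset_union {U V E : Set Z} (h : U ⊆ V ∪ E) (z : Z) :
    U.indicator (fun _ => (1 : ℝ)) z ≤
      V.indicator (fun _ => 1) z + E.indicator (fun _ => 1) z := by
  by_cases hU : z ∈ U
  · rcases h hU with hV | hE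
    · simp [hU, hV, indicator_nonneg]
    · simp [hU, hE, indicator_nonneg]
  · simp [hU, indicator_nonneg, add_nonneg]

lemma windowAverage_indicator_le_of_subset_union {U V E : Set Z} (h : U ⊆ V ∪ E)
    (M L : ℕ) (z : Z) :
    windowAverage R (U.indicator fun _ => 1) M L z ≤
      windowAverage R (V.indicator fun _ => 1) M L z +
        windowAverage R (E.indicator fun _ => 1) M L z := by
  simp only [windowAverage, ← mul_add, ← Finset.sum_add_distrib]
  gcongr with j
  exact indicator_one_le_add_of_subset_union h _

variable [MeasurableSpace Z] {μ : Measure Z}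

lemma measureReal_le_add_of_subset_union [IsFiniteMeasure μ] {U V E : Set Z} (h : U ⊆ V ∪ E) :
    μ.real U ≤ μ.real V + μ.real E :=
  (measureReal_mono h).trans (measureReal_union_le _ _)

lemma abs_windowAverage_indicator_sub_lt [IsFiniteMeasure μ] {U V₁ V₂ E : Set Z}
    {M L : ℕ} {z : Z} {ε η : ℝ} (hU₁ : U ⊆ V₁ ∪ E) (hU₂ : V₂ ⊆ U ∪ E)
    (hV : μ.real V₁ ≤ μ.real V₂ + η) (hE : μ.real E ≤ η)
    (hV₁m : MeasurableSet V₁) (hV₂m : MeasurableSet V₂) (hEm : MeasurableSet E)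
    (hV₁ : |windowAverage R (V₁.indicator fun _ => 1) M L z -
      ∫ w, V₁.indicator (fun _ => (1 : ℝ)) w ∂μ| < ε)
    (hV₂ : |windowAverage R (V₂.indicator fun _ => 1) M L z -
      ∫ w, V₂.indicator (fun _ => (1 : ℝ)) w ∂μ| < ε)
    (hE' : |windowAverage R (E.indicator fun _ => 1) M L z -
      ∫ w, E.indicator (fun _ => (1 : ℝ)) w ∂μ| < ε) :
    |windowAverage R (U.indicator fun _ => 1) M L z - μ.real U| < 2 * ε + 3 * η := by
  simp only [integral_indicator_const _ hV₁m, integral_indicator_const _ hV₂m,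
    integral_indicator_const _ hEm, smul_eq_mul, mul_one] at hV₁ hV₂ hE'
  have ha₁ := windowAverage_indicator_le_of_subset_union (R := R) hU₁ M L z
  have ha₂ := windowAverage_indicator_le_of_subset_union (R := R) hU₂ M L z
  have hm₁ := measureReal_le_add_of_subset_union (μ := μ) hU₁
  have hm₂ := measureReal_le_add_of_subset_union (μ := μ) hU₂
  rw [abs_lt] at hV₁ hV₂ hE' ⊢
  constructor <;> linarith [hV₁.1, hV₁.2, hV₂.1, hV₂.2, hE'.1, hE'.2]

variable [IsProbabilityMeasure μ]

lemma measureReal_compl_le_of_ofReal_lt {s : Set Z} (hs : MeasurableSet s) {η : ℝ}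
    (h : ENNReal.ofReal (1 - η) < μ s) : μ.real sᶜ ≤ η := by
  have := (ENNReal.ofReal_le_iff_le_toReal (measure_ne_top μ s)).1 h.le
  rw [probReal_compl_eq_one_sub hs, measureReal_def]
  linarith

theorem exists_uniform_windowAverage (hR : Ergodic R μ) (hf : Measurable f)
    (hC : ∀ z, |f z| ≤ C) {ε δ κ : ℝ} (hε : 0 < ε) (hδ : 0 < δ) (hκ : 0 < κ) :
    ∃ N : ℕ, ∃ Θ : Set Z, MeasurableSet Θ ∧ μ Θᶜ ≤ ENNReal.ofReal δ ∧
      ∀ M L : ℕ, N ≤ L → κ ≤ (L : ℝ) / M → ∀ z ∈ Θ,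
        |windowAverage R f M L z - ∫ w, f w ∂μ| < ε := by
  set c := ∫ w, f w ∂μ
  have hc : |c| ≤ C := abs_integral_le_of_abs_le hC
  set ε₂ := ε / (2 * (2 / κ + 2))
  have hε₂ : 0 < ε₂ := by positivity
  obtain ⟨t, ht, hμt, hunif⟩ := tendstoUniformlyOn_of_ae_tendsto'
    (fun n => (measurable_birkhoffAverage_s10 hR.measurable hf n).stronglyMeasurable)
    stronglyMeasurable_const (ae_tendsto_birkhoffAverage hR hf hC) hδ
  obtain ⟨N₀, hN₀⟩ :=
    eventually_atTop.1 (Metric.tendstoUniformlyOn_iff.1 hunif ε₂ hε₂)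
  set K := 2 * N₀ * C
  have hK : 0 ≤ 2 * K + |c| := by
    have := (abs_nonneg c).trans hc
    positivity
  obtain ⟨N, hN⟩ := exists_nat_gt ((2 * K + |c|) * 2 / ε)
  refine ⟨N, tᶜ, ht.compl, by rwa [compl_compl], fun M L hNL hκL z hz => ?_⟩
  have hs := abs_birkhoffSum_sub_le_of_forall_ge hC hc hε₂.le
    fun n hn => by rw [abs_sub_comm, ← Real.dist_eq]; exact hN₀ n hn z hz
  have hNL' : (N : ℝ) ≤ L := by exact_mod_cast hNL
  have hL : (0 : ℝ) < L := ((by positivity : (0 : ℝ) ≤ _).trans_lt hN).trans_le hNL'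
  rw [windowAverage_eq_birkhoffSum_sub]
  refine (abs_increment_div_sub_le hε₂.le hκ hs (by exact_mod_cast hL) hκL).trans_lt ?_
  have h₁ : ε₂ * (2 / κ + 2) = ε / 2 := by
    simp only [ε₂]
    field_simp
  have h₂ : (2 * K + |c|) / L < ε / 2 := by
    rw [div_lt_iff₀ hε] at hN
    rw [div_lt_iff₀ hL]
    linarith [mul_le_mul_of_nonneg_right hNL' hε.le]
  linarith

theorem exists_uniform_windowAverage_finset {ι : Type*} (s : Finset ι) {f : ι → Z → ℝ}
    (hR : Ergodic R μ) (hf : ∀ i ∈ s, Measurable (f i))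
    (hC : ∀ i ∈ s, ∀ z, |f i z| ≤ C)
    {ε δ κ : ℝ} (hε : 0 < ε) (hδ : 0 < δ) (hκ : 0 < κ) :
    ∃ N : ℕ, ∃ Θ : Set Z, MeasurableSet Θ ∧ ENNReal.ofReal (1 - δ) < μ Θ ∧
      ∀ i ∈ s, ∀ M L : ℕ, N ≤ L → κ ≤ (L : ℝ) / M → ∀ z ∈ Θ,
        |windowAverage R (f i) M L z - ∫ w, f i w ∂μ| < ε := by
  set δ' := min δ 1 / (s.card + 1)
  have hδ' : 0 < δ' := by positivity
  choose N Θ hΘ hμΘ hwin using fun i : s =>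
    exists_uniform_windowAverage hR (hf i i.2) (hC i i.2) hε hδ' hκ
  refine ⟨Finset.univ.sup N, ⋂ i, Θ i, .iInter hΘ, ?_, fun i hi M L hL hκL z hz =>
    hwin ⟨i, hi⟩ M L ((Finset.le_sup (Finset.mem_univ _)).trans hL) hκL z
      (mem_iInter.1 hz _)⟩
  have hcompl : μ.real (⋂ i, Θ i)ᶜ < min δ 1 := by
    rw [compl_iInter]
    calc μ.real (⋃ i, (Θ i)ᶜ) ≤ ∑ i, μ.real (Θ i)ᶜ := measureReal_iUnion_fintype_le _
      _ ≤ ∑ _i : s, δ' :=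
          Finset.sum_le_sum fun i _ => ENNReal.toReal_le_of_le_ofReal hδ'.le (hμΘ i)
      _ = s.card * δ' := by simp
      _ < min δ 1 := by
          rw [mul_div_assoc', div_lt_iff₀ (by positivity)]
          nlinarith [lt_min hδ one_pos]
  have hΘ' := probReal_compl_eq_one_sub (μ := μ) (MeasurableSet.iInter hΘ)
  rw [← ofReal_measureReal, ENNReal.ofReal_lt_ofReal_iff (by linarith [min_le_right δ 1])]
  linarith [min_le_left δ 1]

end WindowAverage

section Thickening

variable {X : Type*} [PseudoMetricSpace X] [MeasurableSpace X] [OpensMeasurableSpace X]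
  {μ : Measure X}

theorem tendsto_measure_thickening_inter_thickening_compl [IsFiniteMeasure μ] (A : Set X) :
    Tendsto (fun r => μ (thickening r A ∩ thickening r Aᶜ)) (𝓝[>] 0)
      (𝓝 (μ (frontier A))) := by
  have hfr : frontier A = ⋂ r > 0, (thickening r A ∩ thickening r Aᶜ) := by
    rw [frontier_eq_closure_inter_closure, closure_eq_iInter_thickening,
      closure_eq_iInter_thickening]
    ext x
    simp only [mem_inter_iff, mem_iInter, ← forall_and]
  rw [hfr]
  exact tendsto_measure_biInter_gt
    (fun r _ => (isOpen_thickening.inter isOpen_thickening).nullMeasurableSet)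
    (fun _ _ _ h => inter_subset_inter (thickening_mono h _) (thickening_mono h _))
    ⟨1, one_pos, measure_ne_top _ _⟩

lemma exists_pos_measureReal_thickening_inter_lt [IsFiniteMeasure μ] {A : Set X}
    (hA : μ (frontier A) = 0) {η : ℝ} (hη : 0 < η) :
    ∃ r > 0, μ.real (thickening r A ∩ thickening r Aᶜ) < η := by
  obtain ⟨r, hr, hrpos⟩ := (((tendsto_measure_thickening_inter_thickening_compl A).eventually
    (gt_mem_nhds (show μ (frontier A) < ENNReal.ofReal η by
      rw [hA]; exact ENNReal.ofReal_pos.2 hη))).and self_mem_nhdsWithin).exists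
  exact ⟨r, hrpos, ENNReal.toReal_lt_of_lt_ofReal hr⟩

variable {Y : Type*} [MeasurableSpace Y]

open Classical in
/-- The outer and inner approximations `g⁻¹(A⁺) × B` and `g⁻¹(A⁻) × B` of `g⁻¹(A) × B`,
where `A⁺ = thickening r A` and `A⁻ = (thickening r Aᶜ)ᶜ`, and the exceptional set
`{g x ∉ G}`. -/
noncomputable def approxSets (g : X → X) (r : ℝ) (A G : Set X) (B : Set Y) :
    Finset (Set (X × Y)) :=
  {(g ⁻¹' thickening r A) ×ˢ B, (g ⁻¹' (thickening r Aᶜ)ᶜ) ×ˢ B, (g ∘ Prod.fst) ⁻¹' Gᶜ}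

lemma measurableSet_of_mem_approxSets {g : X → X} (hg : Measurable g) {r : ℝ}
    {A G : Set X} (hG : MeasurableSet G) {B : Set Y} (hB : MeasurableSet B) {U : Set (X × Y)}
    (hU : U ∈ approxSets g r A G B) : MeasurableSet U := by
  simp only [approxSets, Finset.mem_insert, Finset.mem_singleton] at hU
  obtain rfl | rfl | rfl := hU
  exacts [(hg isOpen_thickening.measurableSet).prod hB,
    (hg isOpen_thickening.measurableSet.compl).prod hB, (hg.comp measurable_fst) hG.compl]

lemma abs_windowAverage_prod_sub_lt {ρ : Measure (X × Y)} [IsFiniteMeasure ρ]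
    (hρ : ρ.map Prod.fst = μ) {R : X × Y → X × Y} {f g : X → X}
    (hg : MeasurePreserving g μ μ)
    {A G : Set X} {B : Set Y} (hG : MeasurableSet G) (hB : MeasurableSet B) {r ε η : ℝ}
    (hfg : ∀ x, g x ∈ G → dist (g x) (f x) < r)
    (hA : μ.real (thickening r A ∩ thickening r Aᶜ) ≤ η) (hGc : μ.real Gᶜ ≤ η)
    {M L : ℕ} {z : X × Y}
    (h : ∀ U ∈ approxSets g r A G B,
      |windowAverage R (U.indicator fun _ => 1) M L z -
        ∫ w, U.indicator (fun _ => (1 : ℝ)) w ∂ρ| < ε) :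
    |windowAverage R (((f ⁻¹' A) ×ˢ B).indicator fun _ => 1) M L z
      - ρ.real ((f ⁻¹' A) ×ˢ B)| < 2 * ε + 3 * η := by
  have hgρ : MeasurePreserving (g ∘ Prod.fst) ρ μ := hg.comp ⟨measurable_fst, hρ⟩
  have hU₁ : (f ⁻¹' A) ×ˢ B ⊆
      (g ⁻¹' thickening r A) ×ˢ B ∪ (g ∘ Prod.fst) ⁻¹' Gᶜ := by
    rintro ⟨x, y⟩ ⟨hxA, hyB⟩
    by_cases hx : g x ∈ G
    · exact Or.inl ⟨mem_thickening_iff.2 ⟨f x, hxA, hfg x hx⟩, hyB⟩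
    · exact Or.inr hx
  have hU₂ : (g ⁻¹' (thickening r Aᶜ)ᶜ) ×ˢ B ⊆
      (f ⁻¹' A) ×ˢ B ∪ (g ∘ Prod.fst) ⁻¹' Gᶜ := by
    rintro ⟨x, y⟩ ⟨hx, hyB⟩
    by_cases hxG : g x ∈ G
    · exact Or.inl
        ⟨by_contra fun hxA => hx (mem_thickening_iff.2 ⟨f x, hxA, hfg x hxG⟩), hyB⟩
    · exact Or.inr hxG
  have hV : (g ⁻¹' thickening r A) ×ˢ B ⊆ (g ⁻¹' (thickening r Aᶜ)ᶜ) ×ˢ B ∪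
      (g ∘ Prod.fst) ⁻¹' (thickening r A ∩ thickening r Aᶜ) := by
    rintro ⟨x, y⟩ ⟨hx, hyB⟩
    by_cases h : g x ∈ thickening r Aᶜ
    · exact Or.inr ⟨hx, h⟩
    · exact Or.inl ⟨h, hyB⟩
  have hmem : ∀ {U}, U ∈ approxSets g r A G B → MeasurableSet U :=
    measurableSet_of_mem_approxSets hg.measurable hG hB
  have h₁ : (g ⁻¹' thickening r A) ×ˢ B ∈ approxSets g r A G B := by simp [approxSets]
  have h₂ : (g ⁻¹' (thickening r Aᶜ)ᶜ) ×ˢ B ∈ approxSets g r A G B := by simp [approxSets]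
  have h₃ : (g ∘ Prod.fst) ⁻¹' Gᶜ ∈ approxSets g r A G B := by simp [approxSets]
  refine abs_windowAverage_indicator_sub_lt hU₁ hU₂ ?_ ?_ (hmem h₁) (hmem h₂) (hmem h₃)
    (h _ h₁) (h _ h₂) (h _ h₃)
  · refine (measureReal_le_add_of_subset_union hV).trans (add_le_add le_rfl ?_)
    rwa [hgρ.measureReal_preimage
      (isOpen_thickening.inter isOpen_thickening).nullMeasurableSet]
  · rwa [hgρ.measureReal_preimage hG.compl.nullMeasurableSet]

end Thickening

section Flow

variable {X : Type*} {S : ℝ → X → X}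

lemma iterate_flow_one (hS0 : ∀ x, S 0 x = x)
    (hSadd : ∀ t s : ℝ, ∀ x, S (t + s) x = S t (S s x)) (n : ℕ) : (S 1)^[n] = S n := by
  induction n with
  | zero => funext x; simp [hS0]
  | succ n ih => funext x; rw [Function.iterate_succ_apply', ih, Nat.cast_succ, add_comm, hSadd]

lemma iterate_prodMap_flow_one {Y : Type*} {T : ℝ → Y → Y} (hS0 : ∀ x, S 0 x = x)
    (hSadd : ∀ t s : ℝ, ∀ x, S (t + s) x = S t (S s x)) (hT0 : ∀ y, T 0 y = y)
    (hTadd : ∀ t s : ℝ, ∀ y, T (t + s) y = T t (T s y)) (n : ℕ) :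
    (Prod.map (S 1) (T 1))^[n] = Prod.map (S n) (T n) := by
  rw [Prod.map_iterate, iterate_flow_one hS0 hSadd, iterate_flow_one hT0 hTadd]

lemma dist_flow_lt_of_dist_le [PseudoMetricSpace X] (hS0 : ∀ x, S 0 x = x)
    (hSadd : ∀ t s : ℝ, ∀ x, S (t + s) x = S t (S s x)) {G : Set X} {ε₁ r : ℝ}
    (hcont : ∀ x ∈ G, ∀ t t' : ℝ, t ∈ Icc (-ε₁) ε₁ → t' ∈ Icc (-ε₁) ε₁ →
      dist (S t x) (S t' x) < r)
    {p p' : ℝ} (hpp' : dist p p' ≤ ε₁) (x : X) (hx : S p' x ∈ G) :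
    dist (S p' x) (S p x) < r := by
  have h := hcont _ hx 0 (p - p') ⟨by linarith [dist_nonneg.trans hpp'], dist_nonneg.trans hpp'⟩
    (abs_le.1 (Real.dist_eq p p' ▸ hpp'))
  rwa [hS0, ← hSadd, sub_add_cancel] at h

end Flow

theorem stmt10_general {X : Type*} [MetricSpace X]
    [MeasurableSpace X] [BorelSpace X]
    (μ : Measure X) [IsProbabilityMeasure μ]
    (S : ℝ → X → X)
    (hS0 : ∀ x, S 0 x = x)
    (hSadd : ∀ t s : ℝ, ∀ x, S (t + s) x = S t (S s x))
    (hSmp : ∀ t : ℝ, MeasurePreserving (S t) μ μ)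
    -- the almost-continuity condition (15)
    (hAC : ∀ ε : ℝ, 0 < ε → ∃ Xe : Set X, MeasurableSet Xe ∧
      μ Xe > ENNReal.ofReal (1 - ε) ∧
      ∀ ε' : ℝ, 0 < ε' → ∃ ε₁ : ℝ, 0 < ε₁ ∧ ∀ x ∈ Xe, ∀ t t' : ℝ,
        t ∈ Set.Icc (-ε₁) ε₁ → t' ∈ Set.Icc (-ε₁) ε₁ → dist (S t x) (S t' x) < ε')
    {Y : Type*} [MeasurableSpace Y]
    (Tf : ℝ → Y → Y)
    (hT0 : ∀ y, Tf 0 y = y)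
    (hTadd : ∀ t s : ℝ, ∀ y, Tf (t + s) y = Tf t (Tf s y))
    (ρ : Measure (X × Y)) [IsProbabilityMeasure ρ]
    (hmarg1 : ρ.map Prod.fst = μ)
    (herg : Ergodic (Prod.map (S 1) (Tf 1)) ρ)
    (P : Set ℝ) (hPc : IsCompact P)
    (A : Set X) (hfr : μ (frontier A) = 0)
    (B : Set Y) (hB : MeasurableSet B) :
    ∀ ε δ κ : ℝ, 0 < ε → 0 < δ → 0 < κ →
      ∃ N : ℕ, ∃ Θ : Set (X × Y), MeasurableSet Θ ∧ ρ Θ > ENNReal.ofReal (1 - δ) ∧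
        ∀ M L : ℕ, N ≤ L → κ ≤ (L : ℝ) / (M : ℝ) →
          ∀ x : X, ∀ y : Y, (x, y) ∈ Θ → ∀ p ∈ P,
            |(1 / (L : ℝ)) * ∑ j ∈ Finset.Icc M (M + L),
                Set.indicator {q : X × Y | S p q.1 ∈ A ∧ q.2 ∈ B} (fun _ => (1 : ℝ))
                  (S (j : ℝ) x, Tf (j : ℝ) y)
              - (ρ {q : X × Y | S p q.1 ∈ A ∧ q.2 ∈ B}).toReal| < ε := by
  classical
  intro ε δ κ hε hδ hκ
  have hη : 0 < ε / 5 := by positivity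
  obtain ⟨r, hr, hAr⟩ := exists_pos_measureReal_thickening_inter_lt hfr hη
  obtain ⟨Xe, hXe, hμXe, hXecont⟩ := hAC (ε / 5) hη
  obtain ⟨ε₁, hε₁, hcont⟩ := hXecont r hr
  obtain ⟨t, -, hPt⟩ := hPc.elim_nhds_subcover (ball · ε₁) fun p _ => ball_mem_nhds p hε₁
  obtain ⟨N, Θ, hΘ, hρΘ, hwin⟩ := exists_uniform_windowAverage_finset
    (t.biUnion fun p' => approxSets (S p') r A Xe B)
    (f := fun U => U.indicator fun _ => (1 : ℝ)) (C := 1) herg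
    (fun U hU => measurable_const.indicator <| by
      obtain ⟨p', -, hU⟩ := Finset.mem_biUnion.1 hU
      exact measurableSet_of_mem_approxSets (hSmp p').measurable hXe hB hU)
    (fun U _ z => by by_cases hz : z ∈ U <;> simp [hz]) hη hδ hκ
  refine ⟨N, Θ, hΘ, hρΘ, fun M L hNL hκL x y hxy p hp => ?_⟩
  obtain ⟨p', hp't, hpp'⟩ : ∃ p' ∈ t, dist p p' < ε₁ := by simpa using hPt hp
  have key := abs_windowAverage_prod_sub_lt hmarg1 (hSmp p') hXe hB
    (dist_flow_lt_of_dist_le hS0 hSadd hcont hpp'.le) hAr.le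
    (measureReal_compl_le_of_ofReal_lt hXe hμXe) fun U hU =>
      hwin U (Finset.mem_biUnion.2 ⟨p', hp't, hU⟩) M L hNL hκL (x, y) hxy
  simp only [windowAverage, iterate_prodMap_flow_one hS0 hSadd hT0 hTadd, Prod.map_apply]
    at key
  exact key.trans_eq (by ring)

/-- **Lemma 5.4.** Let `(S_t)`, `(T_t)` be ergodic measure-preserving flows on
`(X, d, μ)` (σ-compact metric, satisfying the almost-continuity condition (15)) and on a
standard probability Borel space `(Y, ν)` respectively, and let `ρ` be a joining which is
ergodic for `S₁ × T₁`.  Let `P ⊆ ℝ` be a nonempty compact set, `A` measurable with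
`μ(∂A) = 0` and `B` measurable.  Then for all `ε, δ, κ > 0` there are `N ∈ ℕ` and a set
`Θ` with `ρ(Θ) > 1 − δ` such that for all `M, L` with `L ≥ N`, `L/M ≥ κ`, all
`(x,y) ∈ Θ` and all `p ∈ P`,
`|(1/L) ∑_{j=M}^{M+L} χ_{S₋ₚA × B}(S_j x, T_j y) − ρ(S₋ₚA × B)| < ε`. -/
theorem stmt10 {X : Type*} [MetricSpace X] [SigmaCompactSpace X]
    [MeasurableSpace X] [BorelSpace X]
    (μ : Measure X) [IsProbabilityMeasure μ]
    (S : ℝ → X → X)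
    (hS0 : ∀ x, S 0 x = x)
    (hSadd : ∀ t s : ℝ, ∀ x, S (t + s) x = S t (S s x))
    (hSjm : Measurable fun p : ℝ × X => S p.1 p.2)
    (hSmp : ∀ t : ℝ, MeasurePreserving (S t) μ μ)
    (hSerg : ∀ E : Set X, MeasurableSet E → (∀ t : ℝ, S t ⁻¹' E = E) →
      μ E = 0 ∨ μ E = 1)
    -- the almost-continuity condition (15)
    (hAC : ∀ ε : ℝ, 0 < ε → ∃ Xe : Set X, MeasurableSet Xe ∧
      μ Xe > ENNReal.ofReal (1 - ε) ∧
      ∀ ε' : ℝ, 0 < ε' → ∃ ε₁ : ℝ, 0 < ε₁ ∧ ∀ x ∈ Xe, ∀ t t' : ℝ,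
        t ∈ Set.Icc (-ε₁) ε₁ → t' ∈ Set.Icc (-ε₁) ε₁ → dist (S t x) (S t' x) < ε')
    {Y : Type*} [MeasurableSpace Y] [StandardBorelSpace Y]
    (ν : Measure Y) [IsProbabilityMeasure ν]
    (Tf : ℝ → Y → Y)
    (hT0 : ∀ y, Tf 0 y = y)
    (hTadd : ∀ t s : ℝ, ∀ y, Tf (t + s) y = Tf t (Tf s y))
    (hTjm : Measurable fun p : ℝ × Y => Tf p.1 p.2)
    (hTmp : ∀ t : ℝ, MeasurePreserving (Tf t) ν ν)
    (hTerg : ∀ E : Set Y, MeasurableSet E → (∀ t : ℝ, Tf t ⁻¹' E = E) →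
      ν E = 0 ∨ ν E = 1)
    (ρ : Measure (X × Y)) [IsProbabilityMeasure ρ]
    (hmarg1 : ρ.map Prod.fst = μ) (hmarg2 : ρ.map Prod.snd = ν)
    (hinv : ∀ t : ℝ, MeasurePreserving (Prod.map (S t) (Tf t)) ρ ρ)
    (herg : Ergodic (Prod.map (S 1) (Tf 1)) ρ)
    (P : Set ℝ) (hPne : P.Nonempty) (hPc : IsCompact P)
    (A : Set X) (hA : MeasurableSet A) (hfr : μ (frontier A) = 0)
    (B : Set Y) (hB : MeasurableSet B) :
    ∀ ε δ κ : ℝ, 0 < ε → 0 < δ → 0 < κ →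
      ∃ N : ℕ, ∃ Θ : Set (X × Y), MeasurableSet Θ ∧ ρ Θ > ENNReal.ofReal (1 - δ) ∧
        ∀ M L : ℕ, N ≤ L → κ ≤ (L : ℝ) / (M : ℝ) →
          ∀ x : X, ∀ y : Y, (x, y) ∈ Θ → ∀ p ∈ P,
            |(1 / (L : ℝ)) * ∑ j ∈ Finset.Icc M (M + L),
                Set.indicator {q : X × Y | S p q.1 ∈ A ∧ q.2 ∈ B} (fun _ => (1 : ℝ))
                  (S (j : ℝ) x, Tf (j : ℝ) y)
              - (ρ {q : X × Y | S p q.1 ∈ A ∧ q.2 ∈ B}).toReal| < ε :=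
  stmt10_general μ S hS0 hSadd hSmp hAC Tf hT0 hTadd ρ hmarg1 herg P hPc A hfr B hB
end
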